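/- arXiv:1105.2896 — 7 statements merged into one kernel-verified Lean document; each statement's English description precedes it below -/
import Mathlib

section
/- There is no simple signed Steiner triple system ST(7, 1), i.e., there is no signed set B ⊆ binom(X,3) on a 7-set X with exactly one negative triple such that every pair of points is covered exactly once more by positive triples than by negative triples. -/
/-- A simple signed Steiner triple system: `Bp` and `Bm` are disjoint sets of
3-subsets, and every 2-subset is contained in exactly one more member of `Bp`
than of `Bm`. -/
def IsSSTS {V : Type*} [DecidableEq V] (Bp Bm : Finset (Finset V)) : Prop :=
  Disjoint Bp Bm ∧ (∀ t ∈ Bp ∪ Bm, t.card = 3) ∧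
    ∀ p : Finset V, p.card = 2 →
      (Bp.filter (fun t => p ⊆ t)).card = (Bm.filter (fun t => p ⊆ t)).card + 1

/-!
Let `m` be the negative triple and `Y = mᶜ`, a 4-set. Double counting the pairs inside
`m`, inside `Y`, and all 21 pairs against the positive triples gives `3 |B⁺| = 24` and
`∑_{T ∈ B⁺} (C(|T ∩ m|, 2) + C(|T ∩ Y|, 2)) = 6 + 6`. As no positive triple lies inside
`m`, each contributes `3` to this sum if it lies inside `Y` and `1` otherwise, so exactly
two positive triples lie inside `Y`. Two triples in a 4-set share a pair, which is then
covered twice by `B⁺`, whereas a pair not inside `m` lies in exactly one positive triple.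
-/

open Finset

section
variable {V : Type*} [DecidableEq V]

theorem filter_powersetCard_subset_eq_powersetCard_inter (S t : Finset V) (k : ℕ) :
    {p ∈ S.powersetCard k | p ⊆ t} = (t ∩ S).powersetCard k := by
  ext p
  simp only [mem_filter, mem_powersetCard, subset_inter_iff]
  tauto

theorem sum_card_filter_superset_eq_sum_choose (B : Finset (Finset V)) (S : Finset V) (k : ℕ) :
    ∑ p ∈ S.powersetCard k, #{t ∈ B | p ⊆ t} = ∑ t ∈ B, (#(t ∩ S)).choose k := by
  have := sum_card_bipartiteAbove_eq_sum_card_bipartiteBelow (s := S.powersetCard k) (t := B)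
    (r := (· ⊆ ·))
  simp only [bipartiteAbove, bipartiteBelow] at this
  rw [this]
  refine sum_congr rfl fun t _ => ?_
  rw [filter_powersetCard_subset_eq_powersetCard_inter, card_powersetCard]

theorem choose_two_card_inter_add_choose_two_card_inter_compl [Fintype V] {t m : Finset V}
    (ht : #t = 3) (htm : ¬ t ⊆ m) :
    (#(t ∩ m)).choose 2 + (#(t ∩ mᶜ)).choose 2 = 1 + 2 * if Disjoint t m then 1 else 0 := by
  have hcompl : #(t ∩ mᶜ) = 3 - #(t ∩ m) := by
    rw [← sdiff_eq_inter_compl, ← ht, ← card_inter_add_card_sdiff t m]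
    omega
  have hlt : #(t ∩ m) < 3 := by
    refine lt_of_le_of_ne (ht ▸ card_le_card inter_subset_left) fun h => htm ?_
    exact inter_eq_left.mp (eq_of_subset_of_card_le inter_subset_left (by omega))
  simp only [hcompl, disjoint_iff_inter_eq_empty, ← card_eq_zero]
  generalize #(t ∩ m) = a at hlt ⊢
  interval_cases a <;> rfl

theorem not_subset_of_subset_compl [Fintype V] {p m : Finset V} (hp : p.Nonempty)
    (hpc : p ⊆ mᶜ) : ¬ p ⊆ m := by
  obtain ⟨x, hx⟩ := hp
  exact fun hpm => mem_compl.mp (hpc hx) (hpm hx)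

namespace IsSSTS

variable {Bp : Finset (Finset V)} {m : Finset V}

theorem card_eq_three_of_mem {Bm : Finset (Finset V)} (h : IsSSTS Bp Bm) {t : Finset V}
    (ht : t ∈ Bp ∪ Bm) : #t = 3 :=
  h.2.1 t ht

theorem card_eq_three_of_neg (h : IsSSTS Bp {m}) : #m = 3 :=
  h.card_eq_three_of_mem (mem_union_right _ (mem_singleton_self m))

theorem not_subset_of_mem (h : IsSSTS Bp {m}) {t : Finset V} (ht : t ∈ Bp) : ¬ t ⊆ m := by
  intro htm
  have hcard : #m ≤ #t := by
    rw [h.card_eq_three_of_mem (mem_union_left _ ht), h.card_eq_three_of_neg]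
  obtain rfl := eq_of_subset_of_card_le htm hcard
  exact disjoint_left.mp h.1 ht (mem_singleton_self t)

theorem card_filter_superset (h : IsSSTS Bp {m}) {p : Finset V} (hp : #p = 2) :
    #{t ∈ Bp | p ⊆ t} = if p ⊆ m then 2 else 1 := by
  rw [h.2.2 p hp, filter_singleton]
  split_ifs <;> simp

theorem sum_choose_card_inter (h : IsSSTS Bp {m}) : ∑ t ∈ Bp, (#(t ∩ m)).choose 2 = 6 := by
  have hm := h.card_eq_three_of_neg
  rw [← sum_card_filter_superset_eq_sum_choose, sum_congr rfl fun p hp =>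
    (h.card_filter_superset (mem_powersetCard.mp hp).2).trans (if_pos (mem_powersetCard.mp hp).1)]
  simp [hm]

variable [Fintype V]

theorem sum_choose_card_inter_compl (h : IsSSTS Bp {m}) :
    ∑ t ∈ Bp, (#(t ∩ mᶜ)).choose 2 = (#mᶜ).choose 2 := by
  have hout : ∀ p ∈ mᶜ.powersetCard 2, ¬ p ⊆ m := fun p hp =>
    have ⟨hpc, hp2⟩ := mem_powersetCard.mp hp
    not_subset_of_subset_compl (card_pos.mp (by omega)) hpc
  rw [← sum_card_filter_superset_eq_sum_choose, sum_congr rfl fun p hp =>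
    (h.card_filter_superset (mem_powersetCard.mp hp).2).trans (if_neg (hout p hp))]
  simp

theorem three_mul_card (h : IsSSTS Bp {m}) : 3 * #Bp = (Fintype.card V).choose 2 + 3 := by
  have hm := h.card_eq_three_of_neg
  calc 3 * #Bp = ∑ t ∈ Bp, (#(t ∩ univ)).choose 2 := by
        rw [sum_congr rfl fun t ht => by
          rw [inter_univ, h.card_eq_three_of_mem (mem_union_left _ ht)],
          sum_const, smul_eq_mul, mul_comm]
        rfl
    _ = ∑ p ∈ univ.powersetCard 2, (1 + if p ⊆ m then 1 else 0) := by
        rw [← sum_card_filter_superset_eq_sum_choose]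
        refine sum_congr rfl fun p hp => ?_
        rw [h.card_filter_superset (mem_powersetCard.mp hp).2]
        split_ifs <;> rfl
    _ = (Fintype.card V).choose 2 + 3 := by
        rw [sum_add_distrib, ← card_filter, filter_powersetCard_subset_eq_powersetCard_inter]
        simp [hm]

theorem card_filter_disjoint (h : IsSSTS Bp {m}) :
    3 * (#mᶜ).choose 2 + 15 = (Fintype.card V).choose 2 + 6 * #{t ∈ Bp | Disjoint t m} := by
  have hsum : ∑ t ∈ Bp, ((#(t ∩ m)).choose 2 + (#(t ∩ mᶜ)).choose 2) =
      #Bp + 2 * #{t ∈ Bp | Disjoint t m} := by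
    rw [sum_congr rfl fun t ht => choose_two_card_inter_add_choose_two_card_inter_compl
      (h.card_eq_three_of_mem (mem_union_left _ ht)) (h.not_subset_of_mem ht),
      sum_add_distrib, ← mul_sum, card_filter, card_eq_sum_ones]
  rw [sum_add_distrib, h.sum_choose_card_inter, h.sum_choose_card_inter_compl] at hsum
  have := h.three_mul_card
  omega

theorem card_filter_disjoint_le_one (h : IsSSTS Bp {m}) (hm : #mᶜ ≤ 4) :
    #{t ∈ Bp | Disjoint t m} ≤ 1 := by
  by_contra! hlt
  obtain ⟨t₁, ht₁, t₂, ht₂, hne⟩ := one_lt_card.mp hlt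
  simp only [mem_filter, ← subset_compl_iff_disjoint_right] at ht₁ ht₂
  have hinter : 2 ≤ #(t₁ ∩ t₂) := by
    have hunion := card_union_add_card_inter t₁ t₂
    have hsub := card_le_card (union_subset ht₁.2 ht₂.2)
    rw [h.card_eq_three_of_mem (mem_union_left _ ht₁.1),
      h.card_eq_three_of_mem (mem_union_left _ ht₂.1)] at hunion
    omega
  obtain ⟨p, hpt, hp⟩ := exists_subset_card_eq hinter
  have hpm : ¬ p ⊆ m := not_subset_of_subset_compl (card_pos.mp (by omega))
    (hpt.trans (inter_subset_left.trans ht₁.2))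
  have hcover : 1 < #{t ∈ Bp | p ⊆ t} := one_lt_card.mpr
    ⟨t₁, mem_filter.mpr ⟨ht₁.1, hpt.trans inter_subset_left⟩,
      t₂, mem_filter.mpr ⟨ht₂.1, hpt.trans inter_subset_right⟩, hne⟩
  rw [h.card_filter_superset hp, if_neg hpm] at hcover
  exact hcover.false

end IsSSTS
end

/-- there is no ST(7,1). -/
theorem no_st_7_1 :
    ¬ ∃ Bp Bm : Finset (Finset (Fin 7)), IsSSTS Bp Bm ∧ Bm.card = 1 := by
  rintro ⟨Bp, Bm, h, hBm⟩
  obtain ⟨m, rfl⟩ := card_eq_one.mp hBm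
  have hm : #mᶜ = 4 := by rw [card_compl, h.card_eq_three_of_neg, Fintype.card_fin]
  have hcount := h.card_filter_disjoint
  have hle := h.card_filter_disjoint_le_one hm.le
  rw [hm, Fintype.card_fin] at hcount
  norm_num [Nat.choose] at hcount
  omega
end

section
/- Let (X, B) be an ST(7, 4). Then for every point x ∈ X, m(x, B⁻) ≤ 2, and for every pair α ∈ binom(X,2), m(α, B⁻) ≤ 1. -/
open Finset

lemma point_count (C : Finset (Finset (Fin 7))) (h3 : ∀ t ∈ C, t.card = 3) (x : Fin 7) :
    ∑ y ∈ univ.erase x, (C.filter (fun t => ({x, y} : Finset (Fin 7)) ⊆ t)).card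
      = 2 * (C.filter (fun t => x ∈ t)).card := by
  have h1 : ∀ y : Fin 7, (C.filter (fun t => ({x, y} : Finset (Fin 7)) ⊆ t))
      = C.filter (fun t => x ∈ t ∧ y ∈ t) := by
    intro y
    apply filter_congr
    intro t _
    simp [insert_subset_iff]
  simp only [h1, card_filter]
  rw [Finset.sum_comm, Finset.mul_sum]
  apply Finset.sum_congr rfl
  intro t ht
  by_cases hx : x ∈ t
  · simp only [hx, true_and, if_true, mul_one]
    have h2 : (univ.erase x).filter (fun y => y ∈ t) = t.erase x := by
      ext z
      simp [mem_erase, and_comm]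
    calc ∑ y ∈ univ.erase x, (if y ∈ t then 1 else 0)
        = ((univ.erase x).filter (fun y => y ∈ t)).card := (card_filter _ _).symm
      _ = 2 := by rw [h2, card_erase_of_mem hx, h3 t ht]
  · simp [hx]

lemma triple_count (C : Finset (Finset (Fin 7))) (h3 : ∀ t ∈ C, t.card = 3) :
    ∑ p ∈ (univ : Finset (Fin 7)).powersetCard 2, (C.filter (fun t => p ⊆ t)).card
      = 3 * C.card := by
  simp only [card_filter]
  rw [Finset.sum_comm, Finset.card_eq_sum_ones C, Finset.mul_sum]
  apply Finset.sum_congr rfl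
  intro t ht
  have h2 : ((univ : Finset (Fin 7)).powersetCard 2).filter (fun p => p ⊆ t)
      = t.powersetCard 2 := by
    ext p
    simp only [mem_filter, mem_powersetCard, subset_univ, true_and]
    tauto
  calc ∑ p ∈ (univ : Finset (Fin 7)).powersetCard 2, (if p ⊆ t then 1 else 0)
      = (((univ : Finset (Fin 7)).powersetCard 2).filter (fun p => p ⊆ t)).card :=
        (card_filter _ _).symm
    _ = 3 := by rw [h2, card_powersetCard, h3 t ht]; rfl
    _ = 3 * 1 := rfl

lemma degEq (Bp Bm : Finset (Finset (Fin 7))) (h3 : ∀ t ∈ Bp ∪ Bm, t.card = 3)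
    (hp : ∀ p : Finset (Fin 7), p.card = 2 →
      (Bp.filter (fun t => p ⊆ t)).card = (Bm.filter (fun t => p ⊆ t)).card + 1)
    (x : Fin 7) :
    (Bp.filter (fun t => x ∈ t)).card = (Bm.filter (fun t => x ∈ t)).card + 3 := by
  have h3p : ∀ t ∈ Bp, t.card = 3 := fun t ht => h3 t (mem_union_left _ ht)
  have h3m : ∀ t ∈ Bm, t.card = 3 := fun t ht => h3 t (mem_union_right _ ht)
  have e1 := point_count Bp h3p x
  have e2 := point_count Bm h3m x
  have e3 : ∑ y ∈ univ.erase x, (Bp.filter (fun t => ({x, y} : Finset (Fin 7)) ⊆ t)).card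
      = (∑ y ∈ univ.erase x, (Bm.filter (fun t => ({x, y} : Finset (Fin 7)) ⊆ t)).card)
        + (univ.erase x).card := by
    rw [card_eq_sum_ones, ← Finset.sum_add_distrib]
    apply Finset.sum_congr rfl
    intro y hy
    exact hp _ (card_pair (Ne.symm (mem_erase.mp hy).1))
  have e4 : ((univ : Finset (Fin 7)).erase x).card = 6 := by
    rw [card_erase_of_mem (mem_univ x)]; simp
  omega

lemma sizeBp (Bp Bm : Finset (Finset (Fin 7))) (h3 : ∀ t ∈ Bp ∪ Bm, t.card = 3)
    (hp : ∀ p : Finset (Fin 7), p.card = 2 →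
      (Bp.filter (fun t => p ⊆ t)).card = (Bm.filter (fun t => p ⊆ t)).card + 1)
    (hs : Bm.card = 4) : Bp.card = 11 := by
  have h3p : ∀ t ∈ Bp, t.card = 3 := fun t ht => h3 t (mem_union_left _ ht)
  have h3m : ∀ t ∈ Bm, t.card = 3 := fun t ht => h3 t (mem_union_right _ ht)
  have e1 := triple_count Bp h3p
  have e2 := triple_count Bm h3m
  have e3 : ∑ p ∈ (univ : Finset (Fin 7)).powersetCard 2, (Bp.filter (fun t => p ⊆ t)).card
      = (∑ p ∈ (univ : Finset (Fin 7)).powersetCard 2, (Bm.filter (fun t => p ⊆ t)).card)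
        + ((univ : Finset (Fin 7)).powersetCard 2).card := by
    rw [card_eq_sum_ones, ← Finset.sum_add_distrib]
    apply Finset.sum_congr rfl
    intro p hpm
    exact hp _ (mem_powersetCard.mp hpm).2
  have e4 : ((univ : Finset (Fin 7)).powersetCard 2).card = 21 := by
    rw [card_powersetCard]; simp; rfl
  omega

/-- a triple containing a pair is the pair plus a third point -/
lemma third (t p : Finset (Fin 7)) (hp : p.card = 2) (ht : t.card = 3) (hsub : p ⊆ t) :
    ∃ c, c ∉ p ∧ t = insert c p := by
  have h1 : (t \ p).card = 1 := by rw [card_sdiff_of_subset hsub, hp, ht]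
  obtain ⟨c, hc⟩ := card_eq_one.mp h1
  have hcm : c ∈ t \ p := hc ▸ mem_singleton_self c
  refine ⟨c, (mem_sdiff.mp hcm).2, ?_⟩
  have hsub2 : insert c p ⊆ t := insert_subset (mem_sdiff.mp hcm).1 hsub
  have hcard : t.card ≤ (insert c p).card := by
    rw [card_insert_of_notMem (mem_sdiff.mp hcm).2, hp, ht]
  exact (eq_of_subset_of_card_le hsub2 hcard).symm

lemma pair_le_two (Bp Bm : Finset (Finset (Fin 7))) (hd : Disjoint Bp Bm)
    (h3 : ∀ t ∈ Bp ∪ Bm, t.card = 3)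
    (hp : ∀ p : Finset (Fin 7), p.card = 2 →
      (Bp.filter (fun t => p ⊆ t)).card = (Bm.filter (fun t => p ⊆ t)).card + 1)
    (p : Finset (Fin 7)) (hp2 : p.card = 2) :
    (Bm.filter (fun t => p ⊆ t)).card ≤ 2 := by
  have himg : ((Bp ∪ Bm).filter (fun t => p ⊆ t)) ⊆
      ((univ : Finset (Fin 7)) \ p).image (fun z => insert z p) := by
    intro t ht
    obtain ⟨htu, hpt⟩ := mem_filter.mp ht
    obtain ⟨c, hcp, hct⟩ := third t p hp2 (h3 t htu) hpt
    exact mem_image.mpr ⟨c, mem_sdiff.mpr ⟨mem_univ c, hcp⟩, hct.symm⟩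
  have h5 : (((univ : Finset (Fin 7)) \ p).image (fun z => insert z p)).card ≤ 5 := by
    calc (((univ : Finset (Fin 7)) \ p).image (fun z => insert z p)).card
        ≤ ((univ : Finset (Fin 7)) \ p).card := card_image_le
      _ = 5 := by rw [card_sdiff_of_subset (subset_univ p), hp2]; simp
  have hu : ((Bp ∪ Bm).filter (fun t => p ⊆ t)).card
      = (Bp.filter (fun t => p ⊆ t)).card + (Bm.filter (fun t => p ⊆ t)).card := by
    rw [filter_union]
    exact card_union_of_disjoint (disjoint_filter_filter hd)
  have := card_le_card himg
  have := hp p hp2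
  omega

lemma side (Bp Bm : Finset (Finset (Fin 7))) (hd : Disjoint Bp Bm)
    (h3 : ∀ t ∈ Bp ∪ Bm, t.card = 3)
    (hp : ∀ p : Finset (Fin 7), p.card = 2 →
      (Bp.filter (fun t => p ⊆ t)).card = (Bm.filter (fun t => p ⊆ t)).card + 1)
    (a b c d : Fin 7) (hab : a ≠ b) (hca : c ≠ a) (hcb : c ≠ b)
    (hda : d ≠ a) (hdb : d ≠ b) (hcd : c ≠ d)
    (ht1 : insert c {a, b} ∈ Bm) (ht2 : insert d {a, b} ∈ Bm)
    (hF2 : (Bm.filter (fun t => ({a, b} : Finset (Fin 7)) ⊆ t)).card = 2) :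
    3 ≤ (Bm.filter (fun t => a ∈ t)).card ∧
      ((Bm.filter (fun t => a ∈ t)).card ≤ 3 → ({a, c, d} : Finset (Fin 7)) ∈ Bp) := by
  have h3p : ∀ t ∈ Bp, t.card = 3 := fun t ht => h3 t (mem_union_left _ ht)
  have hab2 : ({a, b} : Finset (Fin 7)).card = 2 := card_pair hab
  have hct1 : (insert c ({a, b} : Finset (Fin 7))).card = 3 := by
    rw [card_insert_of_notMem (by simp [hca, hcb]), hab2]
  have hdt2 : (insert d ({a, b} : Finset (Fin 7))).card = 3 := by
    rw [card_insert_of_notMem (by simp [hda, hdb]), hab2]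
  set S1 := Bp.filter (fun t => ({a, b} : Finset (Fin 7)) ⊆ t) with hS1def
  set S2 := Bp.filter (fun t => ({a, c} : Finset (Fin 7)) ⊆ t) with hS2def
  set S3 := Bp.filter (fun t => ({a, d} : Finset (Fin 7)) ⊆ t) with hS3def
  have hS1 : S1.card = 3 := by rw [hS1def, hp _ hab2, hF2]
  have hS2 : 2 ≤ S2.card := by
    rw [hS2def, hp _ (card_pair (Ne.symm hca))]
    have : insert c ({a, b} : Finset (Fin 7)) ∈
        Bm.filter (fun t => ({a, c} : Finset (Fin 7)) ⊆ t) := by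
      refine mem_filter.mpr ⟨ht1, ?_⟩
      intro z hz
      simp only [mem_insert, mem_singleton] at hz ⊢
      tauto
    have := card_pos.mpr ⟨_, this⟩
    omega
  have hS3 : 2 ≤ S3.card := by
    rw [hS3def, hp _ (card_pair (Ne.symm hda))]
    have : insert d ({a, b} : Finset (Fin 7)) ∈
        Bm.filter (fun t => ({a, d} : Finset (Fin 7)) ⊆ t) := by
      refine mem_filter.mpr ⟨ht2, ?_⟩
      intro z hz
      simp only [mem_insert, mem_singleton] at hz ⊢
      tauto
    have := card_pos.mpr ⟨_, this⟩
    omega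
  have hd12 : Disjoint S1 S2 := by
    rw [disjoint_left]
    intro t htS1 htS2
    obtain ⟨htp, hsub1⟩ := mem_filter.mp htS1
    obtain ⟨_, hsub2⟩ := mem_filter.mp htS2
    have hsubc : insert c ({a, b} : Finset (Fin 7)) ⊆ t :=
      insert_subset (hsub2 (by simp)) hsub1
    have : insert c ({a, b} : Finset (Fin 7)) = t :=
      eq_of_subset_of_card_le hsubc (by rw [h3p t htp, hct1])
    exact (disjoint_left.mp hd htp) (this ▸ ht1)
  have hd13 : Disjoint S1 S3 := by
    rw [disjoint_left]
    intro t htS1 htS3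
    obtain ⟨htp, hsub1⟩ := mem_filter.mp htS1
    obtain ⟨_, hsub3⟩ := mem_filter.mp htS3
    have hsubd : insert d ({a, b} : Finset (Fin 7)) ⊆ t :=
      insert_subset (hsub3 (by simp)) hsub1
    have : insert d ({a, b} : Finset (Fin 7)) = t :=
      eq_of_subset_of_card_le hsubd (by rw [h3p t htp, hdt2])
    exact (disjoint_left.mp hd htp) (this ▸ ht2)
  have hacd3 : ({a, c, d} : Finset (Fin 7)).card = 3 := by
    rw [card_insert_of_notMem (by simp [Ne.symm hca, Ne.symm hda]),
      card_pair hcd]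
  have hinter : S2 ∩ S3 ⊆ {({a, c, d} : Finset (Fin 7))} := by
    intro t htm
    obtain ⟨ht2', ht3'⟩ := mem_inter.mp htm
    obtain ⟨htp, hsub2⟩ := mem_filter.mp ht2'
    obtain ⟨_, hsub3⟩ := mem_filter.mp ht3'
    have hsub : ({a, c, d} : Finset (Fin 7)) ⊆ t := by
      intro z hz
      simp only [mem_insert, mem_singleton] at hz
      rcases hz with rfl | rfl | rfl
      · exact hsub2 (by simp)
      · exact hsub2 (by simp)
      · exact hsub3 (by simp)
    have : ({a, c, d} : Finset (Fin 7)) = t :=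
      eq_of_subset_of_card_le hsub (by rw [h3p t htp, hacd3])
    simp [← this]
  have hsubP : S1 ∪ (S2 ∪ S3) ⊆ Bp.filter (fun t => a ∈ t) := by
    intro t htm
    rcases mem_union.mp htm with h' | h'
    · obtain ⟨htp, hsub⟩ := mem_filter.mp h'
      exact mem_filter.mpr ⟨htp, hsub (by simp)⟩
    · rcases mem_union.mp h' with h'' | h''
      · obtain ⟨htp, hsub⟩ := mem_filter.mp h''
        exact mem_filter.mpr ⟨htp, hsub (by simp)⟩
      · obtain ⟨htp, hsub⟩ := mem_filter.mp h''
        exact mem_filter.mpr ⟨htp, hsub (by simp)⟩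
  have e1 : (S2 ∪ S3).card + (S2 ∩ S3).card = S2.card + S3.card :=
    card_union_add_card_inter _ _
  have e2 : (S1 ∪ (S2 ∪ S3)).card = S1.card + (S2 ∪ S3).card :=
    card_union_of_disjoint (disjoint_union_right.mpr ⟨hd12, hd13⟩)
  have e3 : (S1 ∪ (S2 ∪ S3)).card ≤ (Bp.filter (fun t => a ∈ t)).card :=
    card_le_card hsubP
  have hI : (S2 ∩ S3).card ≤ 1 :=
    le_trans (card_le_card hinter) (by simp)
  have deg := degEq Bp Bm h3 hp a
  constructor
  · omega
  · intro hNa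
    by_contra hacd
    have hempty : S2 ∩ S3 = ∅ := by
      rw [eq_empty_iff_forall_notMem]
      intro t htm
      have h1 := mem_singleton.mp (hinter htm)
      have h2 := (mem_filter.mp (mem_inter.mp htm).1).1
      exact hacd (h1 ▸ h2)
    rw [hempty, card_empty] at e1
    omega

lemma pair_bound (Bp Bm : Finset (Finset (Fin 7))) (hd : Disjoint Bp Bm)
    (h3 : ∀ t ∈ Bp ∪ Bm, t.card = 3)
    (hp : ∀ p : Finset (Fin 7), p.card = 2 →
      (Bp.filter (fun t => p ⊆ t)).card = (Bm.filter (fun t => p ⊆ t)).card + 1)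
    (hs : Bm.card = 4) :
    ∀ p : Finset (Fin 7), p.card = 2 → (Bm.filter (fun t => p ⊆ t)).card ≤ 1 := by
  have h3m : ∀ t ∈ Bm, t.card = 3 := fun t ht => h3 t (mem_union_right _ ht)
  intro p hp2
  by_contra hcon
  push_neg at hcon
  have h2 : (Bm.filter (fun t => p ⊆ t)).card = 2 :=
    le_antisymm (pair_le_two Bp Bm hd h3 hp p hp2) hcon
  obtain ⟨t1, ht1, t2, ht2, hne⟩ := one_lt_card.mp hcon
  obtain ⟨a, b, hab, rfl⟩ := card_eq_two.mp hp2
  have ht1m : t1 ∈ Bm := (mem_filter.mp ht1).1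
  have ht2m : t2 ∈ Bm := (mem_filter.mp ht2).1
  obtain ⟨c, hcp, hct1⟩ := third t1 {a, b} hp2 (h3m t1 ht1m) (mem_filter.mp ht1).2
  obtain ⟨d, hdp, hdt2⟩ := third t2 {a, b} hp2 (h3m t2 ht2m) (mem_filter.mp ht2).2
  have hca : c ≠ a := fun h => hcp (by simp [h])
  have hcb : c ≠ b := fun h => hcp (by simp [h])
  have hda : d ≠ a := fun h => hdp (by simp [h])
  have hdb : d ≠ b := fun h => hdp (by simp [h])
  have hcd : c ≠ d := fun h => hne (by rw [hct1, hdt2, h])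
  have ht1m' : insert c ({a, b} : Finset (Fin 7)) ∈ Bm := hct1 ▸ ht1m
  have ht2m' : insert d ({a, b} : Finset (Fin 7)) ∈ Bm := hdt2 ▸ ht2m
  have hpc : ({b, a} : Finset (Fin 7)) = {a, b} := pair_comm b a
  have sidea := side Bp Bm hd h3 hp a b c d hab hca hcb hda hdb hcd ht1m' ht2m' h2
  have sideb := side Bp Bm hd h3 hp b a c d hab.symm hcb hca hdb hda hcd
    (by rw [hpc]; exact ht1m') (by rw [hpc]; exact ht2m') (by rw [hpc]; exact h2)
  have hi : Bm.filter (fun t => a ∈ t) ∩ Bm.filter (fun t => b ∈ t)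
      = Bm.filter (fun t => ({a, b} : Finset (Fin 7)) ⊆ t) := by
    rw [← filter_and]
    apply filter_congr
    intro t _
    simp [insert_subset_iff]
  have e := card_union_add_card_inter (Bm.filter (fun t => a ∈ t))
    (Bm.filter (fun t => b ∈ t))
  rw [hi, h2] at e
  have hu : (Bm.filter (fun t => a ∈ t) ∪ Bm.filter (fun t => b ∈ t)).card ≤ 4 := by
    rw [← hs]
    exact card_le_card (union_subset (filter_subset _ _) (filter_subset _ _))
  have hNa : (Bm.filter (fun t => a ∈ t)).card = 3 := by
    have := sidea.1; have := sideb.1; omega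
  have hNb : (Bm.filter (fun t => b ∈ t)).card = 3 := by
    have := sidea.1; have := sideb.1; omega
  have hacd : ({a, c, d} : Finset (Fin 7)) ∈ Bp := sidea.2 (le_of_eq hNa)
  have hbcd : ({b, c, d} : Finset (Fin 7)) ∈ Bp := sideb.2 (le_of_eq hNb)
  have hacd3 : ({a, c, d} : Finset (Fin 7)).card = 3 := by
    rw [card_insert_of_notMem (by simp [Ne.symm hca, Ne.symm hda]), card_pair hcd]
  have hbcd3 : ({b, c, d} : Finset (Fin 7)).card = 3 := by
    rw [card_insert_of_notMem (by simp [Ne.symm hcb, Ne.symm hdb]), card_pair hcd]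
  have hcd2 : ({c, d} : Finset (Fin 7)).card = 2 := card_pair hcd
  have hne2 : ({a, c, d} : Finset (Fin 7)) ≠ {b, c, d} := by
    intro h
    have : a ∈ ({b, c, d} : Finset (Fin 7)) := h ▸ (by simp : a ∈ ({a, c, d} : Finset (Fin 7)))
    simp only [mem_insert, mem_singleton] at this
    rcases this with h' | h' | h'
    · exact hab h'
    · exact hca h'.symm
    · exact hda h'.symm
  have h2cd : 1 < (Bp.filter (fun t => ({c, d} : Finset (Fin 7)) ⊆ t)).card := by
    apply one_lt_card.mpr
    refine ⟨{a, c, d}, mem_filter.mpr ⟨hacd, ?_⟩, {b, c, d}, mem_filter.mpr ⟨hbcd, ?_⟩, hne2⟩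
    · intro z hz; simp only [mem_insert, mem_singleton] at hz ⊢; tauto
    · intro z hz; simp only [mem_insert, mem_singleton] at hz ⊢; tauto
  have hm1 : 0 < (Bm.filter (fun t => ({c, d} : Finset (Fin 7)) ⊆ t)).card := by
    rw [hp _ hcd2] at h2cd; omega
  obtain ⟨t, htmem⟩ := card_pos.mp hm1
  obtain ⟨htm, hcdt⟩ := mem_filter.mp htmem
  have hall : a ∈ t ∨ b ∈ t := by
    have hunion : Bm.filter (fun t => a ∈ t) ∪ Bm.filter (fun t => b ∈ t) = Bm := by
      apply eq_of_subset_of_card_le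
        (union_subset (filter_subset _ _) (filter_subset _ _))
      omega
    have : t ∈ Bm.filter (fun t => a ∈ t) ∪ Bm.filter (fun t => b ∈ t) := by
      rw [hunion]; exact htm
    rcases mem_union.mp this with h' | h'
    · exact Or.inl (mem_filter.mp h').2
    · exact Or.inr (mem_filter.mp h').2
  rcases hall with ha | hb
  · have hsub : ({a, c, d} : Finset (Fin 7)) ⊆ t := insert_subset ha hcdt
    have heq : ({a, c, d} : Finset (Fin 7)) = t :=
      eq_of_subset_of_card_le hsub (by rw [h3m t htm, hacd3])
    exact disjoint_left.mp hd hacd (heq ▸ htm)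
  · have hsub : ({b, c, d} : Finset (Fin 7)) ⊆ t := insert_subset hb hcdt
    have heq : ({b, c, d} : Finset (Fin 7)) = t :=
      eq_of_subset_of_card_le hsub (by rw [h3m t htm, hbcd3])
    exact disjoint_left.mp hd hbcd (heq ▸ htm)

/-- in an ST(7,4), every point is in at most 2 negative triples and
every pair is in at most 1 negative triple. -/
theorem st_7_4_neg_degrees (Bp Bm : Finset (Finset (Fin 7)))
    (h : IsSSTS Bp Bm) (hs : Bm.card = 4) :
    (∀ x : Fin 7, (Bm.filter (fun t => x ∈ t)).card ≤ 2) ∧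
    (∀ p : Finset (Fin 7), p.card = 2 → (Bm.filter (fun t => p ⊆ t)).card ≤ 1) := by
  obtain ⟨hd, h3, hp⟩ := h
  have h3p : ∀ t ∈ Bp, t.card = 3 := fun t ht => h3 t (mem_union_left _ ht)
  have h3m : ∀ t ∈ Bm, t.card = 3 := fun t ht => h3 t (mem_union_right _ ht)
  have pb := pair_bound Bp Bm hd h3 hp hs
  refine ⟨?_, pb⟩
  intro x
  by_contra hcon
  push_neg at hcon
  obtain ⟨t1, ht1, t2, ht2, t3, ht3, h12, h13, h23⟩ := two_lt_card.mp hcon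
  have ht1m : t1 ∈ Bm := (mem_filter.mp ht1).1
  have ht2m : t2 ∈ Bm := (mem_filter.mp ht2).1
  have ht3m : t3 ∈ Bm := (mem_filter.mp ht3).1
  have hx1 : x ∈ t1 := (mem_filter.mp ht1).2
  have hx2 : x ∈ t2 := (mem_filter.mp ht2).2
  have hx3 : x ∈ t3 := (mem_filter.mp ht3).2
  have key2 : ∀ u, u ∈ Bm → x ∈ u →
      2 ≤ (Bp.filter (fun t => u.erase x ⊆ t)).card := by
    intro u hu hx
    have hcard : (u.erase x).card = 2 := by rw [card_erase_of_mem hx, h3m u hu]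
    rw [hp _ hcard]
    have hmem : u ∈ Bm.filter (fun t => u.erase x ⊆ t) :=
      mem_filter.mpr ⟨hu, erase_subset _ _⟩
    have := card_pos.mpr ⟨_, hmem⟩
    omega
  have key0 : ∀ u, u ∈ Bm → x ∈ u →
      Disjoint (Bp.filter (fun t => x ∈ t)) (Bp.filter (fun t => u.erase x ⊆ t)) := by
    intro u hu hx
    rw [disjoint_left]
    intro t htx htu
    obtain ⟨htp, hxt⟩ := mem_filter.mp htx
    have hsub : u ⊆ t := by
      intro z hz
      by_cases hzx : z = x
      · exact hzx ▸ hxt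
      · exact (mem_filter.mp htu).2 (mem_erase.mpr ⟨hzx, hz⟩)
    have heq : u = t := eq_of_subset_of_card_le hsub (by rw [h3p t htp, h3m u hu])
    exact disjoint_left.mp hd htp (heq ▸ hu)
  have key12 : ∀ u v, u ∈ Bm → v ∈ Bm → u ≠ v → x ∈ u → x ∈ v →
      Disjoint (Bp.filter (fun t => u.erase x ⊆ t))
        (Bp.filter (fun t => v.erase x ⊆ t)) := by
    intro u v hu hv huv hxu hxv
    have herase : Disjoint (u.erase x) (v.erase x) := by
      rw [disjoint_left]
      intro y hyu hyv
      have hyx : y ≠ x := (mem_erase.mp hyu).1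
      have hxy2 : ({x, y} : Finset (Fin 7)).card = 2 := card_pair (Ne.symm hyx)
      have hm1 : u ∈ Bm.filter (fun t => ({x, y} : Finset (Fin 7)) ⊆ t) :=
        mem_filter.mpr ⟨hu, insert_subset hxu
          (singleton_subset_iff.mpr (mem_erase.mp hyu).2)⟩
      have hm2 : v ∈ Bm.filter (fun t => ({x, y} : Finset (Fin 7)) ⊆ t) :=
        mem_filter.mpr ⟨hv, insert_subset hxv
          (singleton_subset_iff.mpr (mem_erase.mp hyv).2)⟩
      have := one_lt_card.mpr ⟨u, hm1, v, hm2, huv⟩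
      have := pb _ hxy2
      omega
    rw [disjoint_left]
    intro t htu htv
    have hsub : u.erase x ∪ v.erase x ⊆ t :=
      union_subset (mem_filter.mp htu).2 (mem_filter.mp htv).2
    have hc : (u.erase x ∪ v.erase x).card = 4 := by
      rw [card_union_of_disjoint herase, card_erase_of_mem hxu,
        card_erase_of_mem hxv, h3m u hu, h3m v hv]
    have hle := card_le_card hsub
    rw [hc, h3p t (mem_filter.mp htu).1] at hle
    omega
  have hdeg := degEq Bp Bm h3 hp x
  have hsize := sizeBp Bp Bm h3 hp hs
  set P0 := Bp.filter (fun t => x ∈ t) with hP0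
  set P1 := Bp.filter (fun t => t1.erase x ⊆ t) with hP1
  set P2 := Bp.filter (fun t => t2.erase x ⊆ t) with hP2
  set P3 := Bp.filter (fun t => t3.erase x ⊆ t) with hP3
  have e1 : (P2 ∪ P3).card = P2.card + P3.card :=
    card_union_of_disjoint (key12 t2 t3 ht2m ht3m h23 hx2 hx3)
  have e2 : (P1 ∪ (P2 ∪ P3)).card = P1.card + (P2 ∪ P3).card :=
    card_union_of_disjoint (disjoint_union_right.mpr
      ⟨key12 t1 t2 ht1m ht2m h12 hx1 hx2, key12 t1 t3 ht1m ht3m h13 hx1 hx3⟩)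
  have e3 : (P0 ∪ (P1 ∪ (P2 ∪ P3))).card = P0.card + (P1 ∪ (P2 ∪ P3)).card :=
    card_union_of_disjoint (disjoint_union_right.mpr
      ⟨key0 t1 ht1m hx1, disjoint_union_right.mpr
        ⟨key0 t2 ht2m hx2, key0 t3 ht3m hx3⟩⟩)
  have esub : P0 ∪ (P1 ∪ (P2 ∪ P3)) ⊆ Bp :=
    union_subset (filter_subset _ _) (union_subset (filter_subset _ _)
      (union_subset (filter_subset _ _) (filter_subset _ _)))
  have hle := card_le_card esub
  have k1 := key2 t1 ht1m hx1
  have k2 := key2 t2 ht2m hx2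
  have k3 := key2 t3 ht3m hx3
  rw [← hP1] at k1
  rw [← hP2] at k2
  rw [← hP3] at k3
  omega
end

section
/- If B ⊆ binom(X,3) on a 7-set X is partitioned into B⁺ and B⁻ such that every pair is 1-balanced (m(α,B⁺) - m(α,B⁻) = 1) and |B⁻| = 7, then there exists a pair α with m(α, binom(X,3) \ B) = 4, unless binom(X,3) \ B is the block set of a 2-(7,3,2) design. -/
open Finset

set_option maxRecDepth 10000 in
lemma pair_in_five (p : Finset (Fin 7)) (hp : p.card = 2) :
    (((Finset.univ.powersetCard 3 : Finset (Finset (Fin 7)))).filter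
      (fun t => p ⊆ t)).card = 5 := by
  have H : ∀ q ∈ (Finset.univ.powersetCard 2 : Finset (Finset (Fin 7))),
      (((Finset.univ.powersetCard 3 : Finset (Finset (Fin 7)))).filter
        (fun t => q ⊆ t)).card = 5 := by decide
  exact H p (by simp [Finset.mem_powersetCard, hp])

lemma triple_has_three (t : Finset (Fin 7)) (ht : t.card = 3) :
    (((Finset.univ.powersetCard 2 : Finset (Finset (Fin 7)))).filter
      (fun p => p ⊆ t)).card = 3 := by
  have : ((Finset.univ.powersetCard 2 : Finset (Finset (Fin 7)))).filter
      (fun p => p ⊆ t) = t.powersetCard 2 := by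
    ext p
    simp [Finset.mem_powersetCard, and_comm]
  rw [this, Finset.card_powersetCard, ht]
  rfl

lemma sum_swap_count (S : Finset (Finset (Fin 7))) :
    ∑ p ∈ (Finset.univ.powersetCard 2 : Finset (Finset (Fin 7))),
        (S.filter (fun t => p ⊆ t)).card
      = ∑ t ∈ S,
        (((Finset.univ.powersetCard 2 : Finset (Finset (Fin 7)))).filter
          (fun p => p ⊆ t)).card := by
  simp_rw [Finset.card_filter]
  exact Finset.sum_comm

lemma sum_count_eq (S : Finset (Finset (Fin 7))) (hS : ∀ t ∈ S, t.card = 3) :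
    ∑ p ∈ (Finset.univ.powersetCard 2 : Finset (Finset (Fin 7))),
        (S.filter (fun t => p ⊆ t)).card = 3 * S.card := by
  rw [sum_swap_count]
  rw [Finset.sum_congr rfl (fun t htS => triple_has_three t (hS t htS))]
  simp [mul_comm]

/-- in an ST(7,7), either some pair lies in 4 triples of the
complement B̄, or B̄ is the block set of a 2-(7,3,2) design. -/
theorem st_7_7_complement_alternative (Bp Bm : Finset (Finset (Fin 7)))
    (h : IsSSTS Bp Bm) (hs : Bm.card = 7) :
    (∃ α : Finset (Fin 7), α.card = 2 ∧
      ((((Finset.univ.powersetCard 3 : Finset (Finset (Fin 7))) \ (Bp ∪ Bm)).filter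
        (fun t => α ⊆ t)).card = 4)) ∨
    (∀ α : Finset (Fin 7), α.card = 2 →
      ((((Finset.univ.powersetCard 3 : Finset (Finset (Fin 7))) \ (Bp ∪ Bm)).filter
        (fun t => α ⊆ t)).card = 2)) := by
  obtain ⟨hdisj, hcard3, hbal⟩ := h
  set T : Finset (Finset (Fin 7)) := Finset.univ.powersetCard 3 with hT
  set P : Finset (Finset (Fin 7)) := Finset.univ.powersetCard 2 with hP
  set C : Finset (Finset (Fin 7)) := T \ (Bp ∪ Bm) with hC
  have hPcard : P.card = 21 := by
    rw [hP, Finset.card_powersetCard, Finset.card_univ]; rfl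
  have hTcard : T.card = 35 := by
    rw [hT, Finset.card_powersetCard, Finset.card_univ]; rfl
  have hUsub : Bp ∪ Bm ⊆ T := by
    intro t ht
    rw [hT, Finset.mem_powersetCard]
    exact ⟨Finset.subset_univ t, hcard3 t ht⟩
  -- |Bp| = 14
  have hBm3 : ∀ t ∈ Bm, t.card = 3 := fun t ht => hcard3 t (Finset.mem_union_right _ ht)
  have hBp3 : ∀ t ∈ Bp, t.card = 3 := fun t ht => hcard3 t (Finset.mem_union_left _ ht)
  have hsumBp : ∑ p ∈ P, (Bp.filter (fun t => p ⊆ t)).card = 3 * Bp.card :=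
    sum_count_eq Bp hBp3
  have hsumBm : ∑ p ∈ P, (Bm.filter (fun t => p ⊆ t)).card = 3 * Bm.card :=
    sum_count_eq Bm hBm3
  have hmemP : ∀ p ∈ P, p.card = 2 := by
    intro p hp; rw [hP, Finset.mem_powersetCard] at hp; exact hp.2
  have hBpcard : Bp.card = 14 := by
    have : ∑ p ∈ P, (Bp.filter (fun t => p ⊆ t)).card
        = ∑ p ∈ P, ((Bm.filter (fun t => p ⊆ t)).card + 1) :=
      Finset.sum_congr rfl (fun p hp => hbal p (hmemP p hp))
    rw [hsumBp] at this
    rw [Finset.sum_add_distrib, hsumBm, Finset.sum_const, hPcard, hs, smul_eq_mul] at this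
    omega
  have hUcard : (Bp ∪ Bm).card = 21 := by
    rw [Finset.card_union_of_disjoint hdisj, hBpcard, hs]
  have hCcard : C.card = 14 := by
    rw [hC, Finset.card_sdiff_of_subset hUsub, hTcard, hUcard]
  -- pointwise identity: mC p + 2 * mBm p = 4
  have hkey : ∀ p ∈ P, (C.filter (fun t => p ⊆ t)).card
      + 2 * (Bm.filter (fun t => p ⊆ t)).card = 4 := by
    intro p hp
    have h5 : (T.filter (fun t => p ⊆ t)).card = 5 := pair_in_five p (hmemP p hp)
    have hsplit : T.filter (fun t => p ⊆ t)
        = C.filter (fun t => p ⊆ t) ∪ ((Bp ∪ Bm).filter (fun t => p ⊆ t)) := by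
      rw [hC, ← Finset.filter_union, Finset.sdiff_union_of_subset hUsub]
    have hd1 : Disjoint (C.filter (fun t => p ⊆ t))
        (((Bp ∪ Bm)).filter (fun t => p ⊆ t)) :=
      Finset.disjoint_filter_filter (Finset.sdiff_disjoint)
    have hd2 : Disjoint (Bp.filter (fun t => p ⊆ t)) (Bm.filter (fun t => p ⊆ t)) :=
      Finset.disjoint_filter_filter hdisj
    have : (T.filter (fun t => p ⊆ t)).card
        = (C.filter (fun t => p ⊆ t)).card
          + ((Bp.filter (fun t => p ⊆ t)).card + (Bm.filter (fun t => p ⊆ t)).card) := by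
      rw [hsplit, Finset.card_union_of_disjoint hd1, Finset.filter_union,
        Finset.card_union_of_disjoint hd2]
    rw [h5] at this
    have hb := hbal p (hmemP p hp)
    omega
  by_cases h4 : ∃ α : Finset (Fin 7), α.card = 2 ∧
      ((C.filter (fun t => α ⊆ t)).card = 4)
  · exact Or.inl h4
  · right
    push_neg at h4
    have hle2 : ∀ p ∈ P, (C.filter (fun t => p ⊆ t)).card ≤ 2 := by
      intro p hp
      have := hkey p hp
      have := h4 p (hmemP p hp)
      omega
    have hsumC : ∑ p ∈ P, (C.filter (fun t => p ⊆ t)).card = 42 := by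
      have hC3 : ∀ t ∈ C, t.card = 3 := by
        intro t ht
        rw [hC, Finset.mem_sdiff, hT, Finset.mem_powersetCard] at ht
        exact ht.1.2
      rw [sum_count_eq C hC3, hCcard]
    have heach : ∀ p ∈ P, (C.filter (fun t => p ⊆ t)).card = 2 := by
      have h2 : ∑ p ∈ P, (2 : ℕ) = 42 := by
        rw [Finset.sum_const, hPcard, smul_eq_mul]
      have := (Finset.sum_eq_sum_iff_of_le hle2).mp (by rw [hsumC, h2])
      exact fun p hp => this p hp
    intro α hα
    exact heach α (by rw [hP, Finset.mem_powersetCard]; exact ⟨Finset.subset_univ α, hα⟩)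
end

section
/- Two distinct Fano planes on the same 7-point set (i.e., two distinct simple 2-(7,3,1) designs on a 7-set) have exactly 0, 1, or 3 blocks in common. -/
/-- A simple 2-(7,3,λ) design: a set of distinct 3-subsets of `Fin 7` such that
every 2-subset lies in exactly `lam` blocks. -/
def IsDesign (lam : ℕ) (D : Finset (Finset (Fin 7))) : Prop :=
  (∀ t ∈ D, t.card = 3) ∧
    ∀ p : Finset (Fin 7), p.card = 2 → (D.filter (fun t => p ⊆ t)).card = lam

namespace FanoAux

variable {D : Finset (Finset (Fin 7))}

lemma exists_block (hD : IsDesign 1 D) {a b : Fin 7} (hab : a ≠ b) :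
    ∃ t ∈ D, a ∈ t ∧ b ∈ t := by
  have h := hD.2 {a, b} (Finset.card_pair hab)
  obtain ⟨t, ht⟩ := Finset.card_eq_one.mp h
  have ht' : t ∈ D.filter (fun u => ({a, b} : Finset (Fin 7)) ⊆ u) := by
    rw [ht]; exact Finset.mem_singleton_self t
  rw [Finset.mem_filter] at ht'
  refine ⟨t, ht'.1, ?_, ?_⟩ <;> apply ht'.2 <;> simp

lemma block_unique (hD : IsDesign 1 D) {t s : Finset (Fin 7)} (ht : t ∈ D) (hs : s ∈ D)
    {a b : Fin 7} (hab : a ≠ b) (hat : a ∈ t) (hbt : b ∈ t) (has : a ∈ s) (hbs : b ∈ s) :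
    t = s := by
  have h := hD.2 {a, b} (Finset.card_pair hab)
  have h1 : t ∈ D.filter (fun u => ({a, b} : Finset (Fin 7)) ⊆ u) :=
    Finset.mem_filter.2 ⟨ht, by simp [Finset.insert_subset_iff, hat, hbt]⟩
  have h2 : s ∈ D.filter (fun u => ({a, b} : Finset (Fin 7)) ⊆ u) :=
    Finset.mem_filter.2 ⟨hs, by simp [Finset.insert_subset_iff, has, hbs]⟩
  exact Finset.card_le_one.1 h.le _ h1 _ h2

lemma common_pt (hD : IsDesign 1 D) {t s : Finset (Fin 7)} (ht : t ∈ D) (hs : s ∈ D)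
    (hne : t ≠ s) {x y : Fin 7} (hxt : x ∈ t) (hxs : x ∈ s) (hyt : y ∈ t) (hys : y ∈ s) :
    x = y := by
  by_contra hxy
  exact hne (block_unique hD ht hs hxy hxt hyt hxs hys)

lemma linesThrough_card (hD : IsDesign 1 D) (p : Fin 7) :
    (D.filter (fun t => p ∈ t)).card = 3 := by
  set LT := D.filter (fun t => p ∈ t) with hLT
  have hmem : ∀ t ∈ LT, t ∈ D ∧ p ∈ t := by
    intro t ht; rwa [hLT, Finset.mem_filter] at ht
  have hbi : LT.biUnion (fun t => t.erase p) = Finset.univ.erase p := by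
    ext x
    simp only [Finset.mem_biUnion, Finset.mem_erase, Finset.mem_univ, and_true]
    constructor
    · rintro ⟨t, _, hx, _⟩; exact hx
    · intro hxp
      obtain ⟨t, htD, hpt, hxt⟩ := exists_block hD (Ne.symm hxp)
      exact ⟨t, by rw [hLT, Finset.mem_filter]; exact ⟨htD, hpt⟩, hxp, hxt⟩
  have hdisj : ∀ t ∈ LT, ∀ s ∈ LT, t ≠ s → Disjoint (t.erase p) (s.erase p) := by
    intro t htm s hsm hns
    rw [Finset.disjoint_left]
    intro x hxt hxs
    rw [Finset.mem_erase] at hxt hxs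
    exact hns (block_unique hD (hmem t htm).1 (hmem s hsm).1 (Ne.symm hxt.1)
      (hmem t htm).2 hxt.2 (hmem s hsm).2 hxs.2)
  have hcard := Finset.card_biUnion hdisj
  rw [hbi] at hcard
  have h6 : (Finset.univ.erase p).card = 6 := by
    rw [Finset.card_erase_of_mem (Finset.mem_univ p)]; simp
  have hsum : ∑ t ∈ LT, (t.erase p).card = ∑ t ∈ LT, 2 := by
    apply Finset.sum_congr rfl
    intro t ht
    rw [Finset.card_erase_of_mem (hmem t ht).2, hD.1 t (hmem t ht).1]
  rw [h6, hsum, Finset.sum_const, smul_eq_mul] at hcard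
  omega

lemma blocks_meet (hD : IsDesign 1 D) {t s : Finset (Fin 7)} (ht : t ∈ D) (hs : s ∈ D) :
    ∃ x, x ∈ t ∧ x ∈ s := by
  by_contra h
  push_neg at h
  have htc := hD.1 t ht
  have hsc := hD.1 s hs
  obtain ⟨p, hp⟩ := Finset.card_pos.1 (by omega : 0 < t.card)
  have hps : p ∉ s := h p hp
  set LT := D.filter (fun u => p ∈ u) with hLT
  have htLT : t ∈ LT := Finset.mem_filter.2 ⟨ht, hp⟩
  have hsub : s ⊆ (LT.erase t).biUnion (fun L => s ∩ L.erase p) := by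
    intro x hx
    have hxp : x ≠ p := fun hxp => hps (hxp ▸ hx)
    obtain ⟨L, hLD, hpL, hxL⟩ := exists_block hD (Ne.symm hxp)
    have hLt : L ≠ t := fun hLt => h x (hLt ▸ hxL) hx
    refine Finset.mem_biUnion.2 ⟨L, Finset.mem_erase.2 ⟨hLt, Finset.mem_filter.2 ⟨hLD, hpL⟩⟩,
      Finset.mem_inter.2 ⟨hx, Finset.mem_erase.2 ⟨hxp, hxL⟩⟩⟩
  have h1 : ∀ L ∈ LT.erase t, (s ∩ L.erase p).card ≤ 1 := by
    intro L hL
    rw [Finset.mem_erase, hLT, Finset.mem_filter] at hL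
    apply Finset.card_le_one.2
    intro x hx y hy
    rw [Finset.mem_inter, Finset.mem_erase] at hx hy
    have hLs : L ≠ s := fun hLs => hps (hLs ▸ hL.2.2)
    exact common_pt hD hL.2.1 hs hLs hx.2.2 hx.1 hy.2.2 hy.1
  have hc1 : s.card ≤ ((LT.erase t).biUnion (fun L => s ∩ L.erase p)).card :=
    Finset.card_le_card hsub
  have hc2 := Finset.card_biUnion_le (s := LT.erase t) (t := fun L => s ∩ L.erase p)
  have hc3 : ∑ L ∈ LT.erase t, (s ∩ L.erase p).card ≤ ∑ L ∈ LT.erase t, 1 :=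
    Finset.sum_le_sum h1
  rw [Finset.sum_const, smul_eq_mul, mul_one] at hc3
  have hc4 : (LT.erase t).card = 2 := by
    rw [Finset.card_erase_of_mem htLT, linesThrough_card hD p]
  omega

lemma third_line (hD : IsDesign 1 D) {L1 L2 : Finset (Fin 7)} (h1 : L1 ∈ D) (h2 : L2 ∈ D)
    (hne : L1 ≠ L2) {p : Fin 7} (hp1 : p ∈ L1) (hp2 : p ∈ L2) :
    insert p (Finset.univ \ (L1 ∪ L2)) ∈ D ∧ (Finset.univ \ (L1 ∪ L2)).card = 2 := by
  have hinter : L1 ∩ L2 = {p} := by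
    apply Finset.Subset.antisymm
    · intro q hq
      rw [Finset.mem_inter] at hq
      rw [Finset.mem_singleton]
      exact common_pt hD h1 h2 hne hq.1 hq.2 hp1 hp2
    · intro q hq
      rw [Finset.mem_singleton] at hq
      subst hq; exact Finset.mem_inter.2 ⟨hp1, hp2⟩
  have hu : (L1 ∪ L2).card = 5 := by
    have := Finset.card_union_add_card_inter L1 L2
    rw [hinter, hD.1 L1 h1, hD.1 L2 h2, Finset.card_singleton] at this
    omega
  have hC : (Finset.univ \ (L1 ∪ L2)).card = 2 := by
    rw [Finset.card_sdiff_of_subset (Finset.subset_univ _), hu]; simp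
  refine ⟨?_, hC⟩
  obtain ⟨x, y, hxy, hCxy⟩ := Finset.card_eq_two.1 hC
  have hxC : x ∈ Finset.univ \ (L1 ∪ L2) := by rw [hCxy]; simp
  have hyC : y ∈ Finset.univ \ (L1 ∪ L2) := by rw [hCxy]; simp
  rw [Finset.mem_sdiff, Finset.mem_union] at hxC hyC
  push_neg at hxC hyC
  have hpx : p ≠ x := fun hpx => hxC.2.1 (hpx ▸ hp1)
  obtain ⟨M, hMD, hpM, hxM⟩ := exists_block hD hpx
  have hMsub : M ⊆ insert p (Finset.univ \ (L1 ∪ L2)) := by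
    intro z hz
    rw [Finset.mem_insert]
    by_cases hzp : z = p
    · left; exact hzp
    right
    rw [Finset.mem_sdiff, Finset.mem_union]
    refine ⟨Finset.mem_univ z, ?_⟩
    rintro (hz1 | hz2)
    · have hML1 : M = L1 := block_unique hD hMD h1 (fun h => hzp h.symm) hpM hz hp1 hz1
      exact hxC.2.1 (hML1 ▸ hxM)
    · have hML2 : M = L2 := block_unique hD hMD h2 (fun h => hzp h.symm) hpM hz hp2 hz2
      exact hxC.2.2 (hML2 ▸ hxM)
  have hcardins : (insert p (Finset.univ \ (L1 ∪ L2))).card = 3 := by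
    rw [Finset.card_insert_of_notMem (by simp [hp1]), hC]
  have : M = insert p (Finset.univ \ (L1 ∪ L2)) :=
    Finset.eq_of_subset_of_card_le hMsub (by rw [hcardins, hD.1 M hMD])
  rwa [← this]

lemma extract_third {L : Finset (Fin 7)} (hL : L.card = 3) {p a : Fin 7}
    (hp : p ∈ L) (ha : a ∈ L) (hpa : p ≠ a) :
    ∃ b, b ∈ L ∧ b ≠ p ∧ b ≠ a ∧ ∀ z ∈ L, z = p ∨ z = a ∨ z = b := by
  have ha' : a ∈ L.erase p := Finset.mem_erase.2 ⟨Ne.symm hpa, ha⟩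
  have h2 : ((L.erase p).erase a).card = 1 := by
    rw [Finset.card_erase_of_mem ha', Finset.card_erase_of_mem hp, hL]
  obtain ⟨b, hb⟩ := Finset.card_eq_one.1 h2
  have hbm : b ∈ (L.erase p).erase a := by rw [hb]; exact Finset.mem_singleton_self b
  rw [Finset.mem_erase, Finset.mem_erase] at hbm
  refine ⟨b, hbm.2.2, hbm.2.1, hbm.1, ?_⟩
  intro z hz
  by_cases hzp : z = p
  · left; exact hzp
  by_cases hza : z = a
  · right; left; exact hza
  right; right
  have : z ∈ (L.erase p).erase a := Finset.mem_erase.2 ⟨hza, Finset.mem_erase.2 ⟨hzp, hz⟩⟩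
  rw [hb, Finset.mem_singleton] at this
  exact this

end FanoAux

set_option maxHeartbeats 2000000 in
/-- two distinct Fano planes on the same 7 points share exactly
0, 1 or 3 blocks. -/
theorem fano_intersection (F₁ F₂ : Finset (Finset (Fin 7)))
    (h₁ : IsDesign 1 F₁) (h₂ : IsDesign 1 F₂) (hne : F₁ ≠ F₂) :
    (F₁ ∩ F₂).card = 0 ∨ (F₁ ∩ F₂).card = 1 ∨ (F₁ ∩ F₂).card = 3 := by
  rcases Nat.lt_or_ge (F₁ ∩ F₂).card 2 with hlt | hge
  · omega
  right; right
  obtain ⟨L1, hL1, L2, hL2, h12⟩ := Finset.one_lt_card.1 hge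
  rw [Finset.mem_inter] at hL1 hL2
  obtain ⟨p, hp1, hp2⟩ := FanoAux.blocks_meet h₁ hL1.1 hL2.1
  obtain ⟨hL3a, hCcard⟩ := FanoAux.third_line h₁ hL1.1 hL2.1 h12 hp1 hp2
  obtain ⟨hL3b, -⟩ := FanoAux.third_line h₂ hL1.2 hL2.2 h12 hp1 hp2
  set C := Finset.univ \ (L1 ∪ L2) with hCdef
  set L3 := insert p C with hL3def
  have hp3 : p ∈ L3 := Finset.mem_insert_self _ _
  obtain ⟨x0, hx0⟩ := Finset.card_pos.1 (by omega : 0 < C.card)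
  have hx0' : x0 ∉ L1 ∧ x0 ∉ L2 := by
    have h := hx0; rw [hCdef, Finset.mem_sdiff, Finset.mem_union] at h; tauto
  have hL31 : L3 ≠ L1 := fun h => hx0'.1 (h ▸ Finset.mem_insert_of_mem hx0)
  have hL32 : L3 ≠ L2 := fun h => hx0'.2 (h ▸ Finset.mem_insert_of_mem hx0)
  by_cases hsub : F₁ ∩ F₂ ⊆ {L1, L2, L3}
  · have hup : ({L1, L2, L3} : Finset (Finset (Fin 7))) ⊆ F₁ ∩ F₂ := by
      intro t ht
      simp only [Finset.mem_insert, Finset.mem_singleton] at ht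
      rcases ht with rfl | rfl | rfl
      · exact Finset.mem_inter.2 ⟨hL1.1, hL1.2⟩
      · exact Finset.mem_inter.2 ⟨hL2.1, hL2.2⟩
      · exact Finset.mem_inter.2 ⟨hL3a, hL3b⟩
    have h3 : ({L1, L2, L3} : Finset (Finset (Fin 7))).card = 3 := by
      rw [Finset.card_insert_of_notMem (by simp [h12, Ne.symm hL31]),
        Finset.card_insert_of_notMem (by simp [Ne.symm hL32]), Finset.card_singleton]
    have hle := Finset.card_le_card hsub
    have hge' := Finset.card_le_card hup
    omega
  exfalso
  rw [Finset.not_subset] at hsub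
  obtain ⟨L4, hL4S, hL4n⟩ := hsub
  rw [Finset.mem_inter] at hL4S
  simp only [Finset.mem_insert, Finset.mem_singleton] at hL4n
  push_neg at hL4n
  obtain ⟨h41, h42, h43⟩ := hL4n
  have hcov : ∀ u : Fin 7, u ∈ L1 ∨ u ∈ L2 ∨ u ∈ L3 := by
    intro u
    by_cases hu1 : u ∈ L1; · left; exact hu1
    by_cases hu2 : u ∈ L2; · right; left; exact hu2
    right; right
    exact Finset.mem_insert_of_mem (by rw [hCdef]; simp [hu1, hu2])
  have hpL4 : p ∉ L4 := by
    intro hp4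
    have hc4 := h₁.1 L4 hL4S.1
    have hec : (L4.erase p).card = 2 := by rw [Finset.card_erase_of_mem hp4, hc4]
    obtain ⟨q, hq⟩ := Finset.card_pos.1 (by omega : 0 < (L4.erase p).card)
    rw [Finset.mem_erase] at hq
    obtain ⟨hqp, hq4⟩ := hq
    rcases hcov q with hq' | hq' | hq'
    · exact h41 (FanoAux.block_unique h₁ hL4S.1 hL1.1 (Ne.symm hqp) hp4 hq4 hp1 hq')
    · exact h42 (FanoAux.block_unique h₁ hL4S.1 hL2.1 (Ne.symm hqp) hp4 hq4 hp2 hq')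
    · exact h43 (FanoAux.block_unique h₁ hL4S.1 hL3a (Ne.symm hqp) hp4 hq4 hp3 hq')
  obtain ⟨a1, ha14, ha11⟩ := FanoAux.blocks_meet h₁ hL4S.1 hL1.1
  obtain ⟨a2, ha24, ha22⟩ := FanoAux.blocks_meet h₁ hL4S.1 hL2.1
  obtain ⟨a3, ha34, ha33⟩ := FanoAux.blocks_meet h₁ hL4S.1 hL3a
  have hpa1 : p ≠ a1 := fun h => hpL4 (h ▸ ha14)
  have hpa2 : p ≠ a2 := fun h => hpL4 (h ▸ ha24)
  have hpa3 : p ≠ a3 := fun h => hpL4 (h ▸ ha34)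
  obtain ⟨b1, hb11, hb1p, hb1a, hz1⟩ := FanoAux.extract_third (h₁.1 L1 hL1.1) hp1 ha11 hpa1
  obtain ⟨b2, hb22, hb2p, hb2a, hz2⟩ := FanoAux.extract_third (h₁.1 L2 hL2.1) hp2 ha22 hpa2
  obtain ⟨b3, hb33, hb3p, hb3a, hz3⟩ := FanoAux.extract_third (h₁.1 L3 hL3a) hp3 ha33 hpa3
  have h23 : L2 ≠ L3 := Ne.symm hL32
  have h13 : L1 ≠ L3 := Ne.symm hL31
  have h14 : L1 ≠ L4 := Ne.symm h41
  have h24 : L2 ≠ L4 := Ne.symm h42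
  have h34 : L3 ≠ L4 := Ne.symm h43
  -- non-membership facts
  have hb1L2 : b1 ∉ L2 := fun h =>
    hb1p (FanoAux.common_pt h₁ hL1.1 hL2.1 h12 hb11 h hp1 hp2)
  have hb1L3 : b1 ∉ L3 := fun h =>
    hb1p (FanoAux.common_pt h₁ hL1.1 hL3a h13 hb11 h hp1 hp3)
  have hb1L4 : b1 ∉ L4 := fun h =>
    hb1a (FanoAux.common_pt h₁ hL1.1 hL4S.1 h14 hb11 h ha11 ha14)
  have hb2L1 : b2 ∉ L1 := fun h =>
    hb2p (FanoAux.common_pt h₁ hL2.1 hL1.1 (Ne.symm h12) hb22 h hp2 hp1)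
  have hb2L3 : b2 ∉ L3 := fun h =>
    hb2p (FanoAux.common_pt h₁ hL2.1 hL3a h23 hb22 h hp2 hp3)
  have hb2L4 : b2 ∉ L4 := fun h =>
    hb2a (FanoAux.common_pt h₁ hL2.1 hL4S.1 h24 hb22 h ha22 ha24)
  have hb3L1 : b3 ∉ L1 := fun h =>
    hb3p (FanoAux.common_pt h₁ hL3a hL1.1 (Ne.symm h13) hb33 h hp3 hp1)
  have hb3L2 : b3 ∉ L2 := fun h =>
    hb3p (FanoAux.common_pt h₁ hL3a hL2.1 (Ne.symm h23) hb33 h hp3 hp2)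
  have hb3L4 : b3 ∉ L4 := fun h =>
    hb3a (FanoAux.common_pt h₁ hL3a hL4S.1 h34 hb33 h ha33 ha34)
  have hb12 : b1 ≠ b2 := fun h => hb2L1 (h ▸ hb11)
  have hb13 : b1 ≠ b3 := fun h => hb3L1 (h ▸ hb11)
  have hb23 : b2 ≠ b3 := fun h => hb3L2 (h ▸ hb22)
  -- the three extra common lines
  obtain ⟨hM1a, hC14⟩ := FanoAux.third_line h₁ hL1.1 hL4S.1 h14 ha11 ha14
  obtain ⟨hM1b, -⟩ := FanoAux.third_line h₂ hL1.2 hL4S.2 h14 ha11 ha14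
  obtain ⟨hM2a, hC24⟩ := FanoAux.third_line h₁ hL2.1 hL4S.1 h24 ha22 ha24
  obtain ⟨hM2b, -⟩ := FanoAux.third_line h₂ hL2.2 hL4S.2 h24 ha22 ha24
  obtain ⟨hM3a, hC34⟩ := FanoAux.third_line h₁ hL3a hL4S.1 h34 ha33 ha34
  obtain ⟨hM3b, -⟩ := FanoAux.third_line h₂ hL3b hL4S.2 h34 ha33 ha34
  have hC14e : Finset.univ \ (L1 ∪ L4) = {b2, b3} := by
    refine (Finset.eq_of_subset_of_card_le ?_ ?_).symm
    · intro z hz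
      rw [Finset.mem_insert, Finset.mem_singleton] at hz
      rcases hz with rfl | rfl <;>
        simp [Finset.mem_sdiff, hb2L1, hb2L4, hb3L1, hb3L4]
    · rw [hC14, Finset.card_pair hb23]
  have hC24e : Finset.univ \ (L2 ∪ L4) = {b1, b3} := by
    refine (Finset.eq_of_subset_of_card_le ?_ ?_).symm
    · intro z hz
      rw [Finset.mem_insert, Finset.mem_singleton] at hz
      rcases hz with rfl | rfl <;>
        simp [Finset.mem_sdiff, hb1L2, hb1L4, hb3L2, hb3L4]
    · rw [hC24, Finset.card_pair hb13]
  have hC34e : Finset.univ \ (L3 ∪ L4) = {b1, b2} := by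
    refine (Finset.eq_of_subset_of_card_le ?_ ?_).symm
    · intro z hz
      rw [Finset.mem_insert, Finset.mem_singleton] at hz
      rcases hz with rfl | rfl <;>
        simp [Finset.mem_sdiff, hb1L3, hb1L4, hb2L3, hb2L4]
    · rw [hC34, Finset.card_pair hb12]
  rw [hC14e] at hM1a hM1b
  rw [hC24e] at hM2a hM2b
  rw [hC34e] at hM3a hM3b
  set M1 : Finset (Fin 7) := insert a1 {b2, b3} with hM1def
  set M2 : Finset (Fin 7) := insert a2 {b1, b3} with hM2def
  set M3 : Finset (Fin 7) := insert a3 {b1, b2} with hM3def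
  have ha1M1 : a1 ∈ M1 := by simp [hM1def]
  have hb2M1 : b2 ∈ M1 := by simp [hM1def]
  have hb3M1 : b3 ∈ M1 := by simp [hM1def]
  have ha2M2 : a2 ∈ M2 := by simp [hM2def]
  have hb1M2 : b1 ∈ M2 := by simp [hM2def]
  have hb3M2 : b3 ∈ M2 := by simp [hM2def]
  have ha3M3 : a3 ∈ M3 := by simp [hM3def]
  have hb1M3 : b1 ∈ M3 := by simp [hM3def]
  have hb2M3 : b2 ∈ M3 := by simp [hM3def]
  have key : ∀ u v : Fin 7, u ≠ v → ∃ t, (t ∈ F₁ ∧ t ∈ F₂) ∧ u ∈ t ∧ v ∈ t := by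
    intro u v huv
    have hu' : u = p ∨ u = a1 ∨ u = b1 ∨ u = a2 ∨ u = b2 ∨ u = a3 ∨ u = b3 := by
      rcases hcov u with h | h | h
      · rcases hz1 u h with h' | h' | h'
        exacts [Or.inl h', Or.inr (Or.inl h'), Or.inr (Or.inr (Or.inl h'))]
      · rcases hz2 u h with h' | h' | h'
        exacts [Or.inl h', Or.inr (Or.inr (Or.inr (Or.inl h'))),
          Or.inr (Or.inr (Or.inr (Or.inr (Or.inl h'))))]
      · rcases hz3 u h with h' | h' | h'
        exacts [Or.inl h', Or.inr (Or.inr (Or.inr (Or.inr (Or.inr (Or.inl h'))))),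
          Or.inr (Or.inr (Or.inr (Or.inr (Or.inr (Or.inr h')))))]
    have hv' : v = p ∨ v = a1 ∨ v = b1 ∨ v = a2 ∨ v = b2 ∨ v = a3 ∨ v = b3 := by
      rcases hcov v with h | h | h
      · rcases hz1 v h with h' | h' | h'
        exacts [Or.inl h', Or.inr (Or.inl h'), Or.inr (Or.inr (Or.inl h'))]
      · rcases hz2 v h with h' | h' | h'
        exacts [Or.inl h', Or.inr (Or.inr (Or.inr (Or.inl h'))),
          Or.inr (Or.inr (Or.inr (Or.inr (Or.inl h'))))]
      · rcases hz3 v h with h' | h' | h'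
        exacts [Or.inl h', Or.inr (Or.inr (Or.inr (Or.inr (Or.inr (Or.inl h'))))),
          Or.inr (Or.inr (Or.inr (Or.inr (Or.inr (Or.inr h')))))]
    rcases hu' with rfl | rfl | rfl | rfl | rfl | rfl | rfl <;>
      rcases hv' with rfl | rfl | rfl | rfl | rfl | rfl | rfl <;>
      first
        | exact absurd rfl huv
        | (refine ⟨L1, ⟨hL1.1, hL1.2⟩, ?_, ?_⟩ <;> assumption)
        | (refine ⟨L2, ⟨hL2.1, hL2.2⟩, ?_, ?_⟩ <;> assumption)
        | (refine ⟨L3, ⟨hL3a, hL3b⟩, ?_, ?_⟩ <;> assumption)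
        | (refine ⟨L4, ⟨hL4S.1, hL4S.2⟩, ?_, ?_⟩ <;> assumption)
        | (refine ⟨M1, ⟨hM1a, hM1b⟩, ?_, ?_⟩ <;> assumption)
        | (refine ⟨M2, ⟨hM2a, hM2b⟩, ?_, ?_⟩ <;> assumption)
        | (refine ⟨M3, ⟨hM3a, hM3b⟩, ?_, ?_⟩ <;> assumption)
  apply hne
  apply Finset.Subset.antisymm
  · intro L hL
    have hc := h₁.1 L hL
    obtain ⟨x, hx, y, hy, hxy⟩ := Finset.one_lt_card.1 (by omega : 1 < L.card)
    obtain ⟨t, ⟨ht1, ht2⟩, hxt, hyt⟩ := key x y hxy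
    have hLt : L = t := FanoAux.block_unique h₁ hL ht1 hxy hx hy hxt hyt
    rw [hLt]; exact ht2
  · intro L hL
    have hc := h₂.1 L hL
    obtain ⟨x, hx, y, hy, hxy⟩ := Finset.one_lt_card.1 (by omega : 1 < L.card)
    obtain ⟨t, ⟨ht1, ht2⟩, hxt, hyt⟩ := key x y hxy
    have hLt : L = t := FanoAux.block_unique h₂ hL ht2 hxy hx hy hxt hyt
    rw [hLt]; exact ht1
end

section
/- No simple 2-(7,3,3) design contains a Fano plane: if D is a set of 21 distinct triples on a 7-set X with every pair of points in exactly 3 triples of D, then no 7 triples of D form a 2-(7,3,1) design. -/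
/-!
If a Fano plane `F` sits inside `D`, then `G = D \ F` is a 2-(7,3,2) design containing no line of
`F`. Counting shows that for each line `l` exactly two blocks of `G` lie in the 4-set `lᶜ`; they are
`lᶜ` minus one point of a pair `S l ⊆ lᶜ` (`omittedPoints G l`). Let `σ l` (`omittedLine F G l`)
be the line through `S l`. The pair condition of `G` at `lᶜ \ S l` forces `S (σ l) = lᶜ \ S l`,
and from this `σ (σ (σ l)) = l`. As `σ` fixes no line, its orbits on the seven lines all have size
three, which is absurd.
-/

open Finset

theorem three_dvd_card_of_iterate_eq_self {β : Type*} (s : Finset β) (f : β → β)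
    (hmaps : ∀ x ∈ s, f x ∈ s) (hne : ∀ x ∈ s, f x ≠ x) (hcube : ∀ x ∈ s, f (f (f x)) = x) :
    3 ∣ #s := by
  classical
  let g : Function.End s := fun x => ⟨f x, hmaps x x.2⟩
  have hg : g ^ 3 ^ 1 = 1 := funext fun x => Subtype.ext (hcube x x.2)
  have hfix : Fintype.card (Function.fixedPoints g) = 0 :=
    Fintype.card_eq_zero_iff.2 ⟨fun x => hne _ x.1.2 (congrArg Subtype.val x.2)⟩
  have := Equiv.Perm.card_fixedPoints_modEq (p := 3) hg
  rwa [hfix, Fintype.card_coe, Nat.modEq_zero_iff_dvd] at this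

theorem sum_choose_two_card_inter {α : Type*} [DecidableEq α] (D : Finset (Finset α))
    (s : Finset α) :
    ∑ t ∈ D, (#(s ∩ t)).choose 2 = ∑ q ∈ s.powersetCard 2, #{t ∈ D | q ⊆ t} := by
  have h (t : Finset α) : (#(s ∩ t)).choose 2 = #{q ∈ s.powersetCard 2 | q ⊆ t} := by
    rw [← card_powersetCard]
    congr 1
    ext q
    simp only [mem_powersetCard, mem_filter, subset_inter_iff]
    tauto
  simp_rw [h]
  exact sum_card_bipartiteAbove_eq_sum_card_bipartiteBelow fun (t q : Finset α) => q ⊆ t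

namespace IsDesign

variable {lam : ℕ} {D F G : Finset (Finset (Fin 7))} {l q t u : Finset (Fin 7)}

theorem card_filter_mem (h : IsDesign lam D) (x : Fin 7) : #{t ∈ D | x ∈ t} = 3 * lam := by
  have hpairs : ∀ y ∈ univ.erase x, #{t ∈ {t ∈ D | x ∈ t} | y ∈ t} = lam := by
    intro y hy
    rw [filter_filter, ← h.2 {x, y} (card_pair (ne_of_mem_erase hy).symm)]
    simp_rw [insert_subset_iff, singleton_subset_iff]
  have hsum := sum_card_inter hpairs
  have htwo : ∀ t ∈ {t ∈ D | x ∈ t}, #(univ.erase x ∩ t) = 2 := by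
    intro t ht
    obtain ⟨htD, hxt⟩ := mem_filter.1 ht
    rw [erase_inter, univ_inter, card_erase_of_mem hxt, h.1 t htD]
  rw [sum_congr rfl htwo, sum_const, smul_eq_mul, card_erase_of_mem (mem_univ x),
    card_univ, Fintype.card_fin] at hsum
  omega

theorem card_eq (h : IsDesign lam D) : #D = 7 * lam := by
  have hsum := sum_card fun x => h.card_filter_mem x
  rw [sum_congr rfl h.1, sum_const, smul_eq_mul, Fintype.card_fin] at hsum
  omega

theorem sdiff {a b : ℕ} (hD : IsDesign a D) (hF : IsDesign b F) (hFD : F ⊆ D) :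
    IsDesign (a - b) (D \ F) := by
  refine ⟨fun t ht => hD.1 t (mem_sdiff.1 ht).1, fun q hq => ?_⟩
  have hfilter : {t ∈ D \ F | q ⊆ t} = {t ∈ D | q ⊆ t} \ {t ∈ F | q ⊆ t} := by
    ext t
    simp only [mem_filter, mem_sdiff]
    tauto
  rw [hfilter, card_sdiff_of_subset (filter_subset_filter _ hFD), hD.2 q hq, hF.2 q hq]

theorem eq_of_subset_of_subset (h : IsDesign 1 F) (hq : #q = 2) (ht : t ∈ F) (hu : u ∈ F)
    (hqt : q ⊆ t) (hqu : q ⊆ u) : t = u :=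
  card_le_one.1 (h.2 q hq).le t (mem_filter.2 ⟨ht, hqt⟩) u (mem_filter.2 ⟨hu, hqu⟩)

theorem card_inter_le_one (h : IsDesign 1 F) (ht : t ∈ F) (hu : u ∈ F) (hne : t ≠ u) :
    #(t ∩ u) ≤ 1 := by
  by_contra! hlt
  obtain ⟨q, hq, hq2⟩ := exists_subset_card_eq hlt
  exact hne (h.eq_of_subset_of_subset hq2 ht hu (hq.trans inter_subset_left)
    (hq.trans inter_subset_right))

/-- The 6 lines other than `t` meet `t` in 9 - 3 points in total, each of them in at most one. -/
theorem inter_nonempty (h : IsDesign 1 F) (ht : t ∈ F) (hu : u ∈ F) : (t ∩ u).Nonempty := by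
  by_contra hdisj
  rw [not_nonempty_iff_eq_empty] at hdisj
  have hne : u ≠ t := by
    rintro rfl
    rw [inter_self] at hdisj
    simpa [hdisj] using h.1 u hu
  have hsum := sum_card_inter fun x (_ : x ∈ t) => h.card_filter_mem x
  rw [← add_sum_erase F _ ht, inter_self, h.1 t ht] at hsum
  have hlt : ∑ m ∈ F.erase t, #(t ∩ m) < ∑ m ∈ F.erase t, 1 :=
    sum_lt_sum (fun m hm => h.card_inter_le_one ht (mem_of_mem_erase hm) (ne_of_mem_erase hm).symm)
      ⟨u, mem_erase.2 ⟨hne, hu⟩, by simp [hdisj]⟩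
  rw [sum_const, smul_eq_mul, mul_one, card_erase_of_mem ht, h.card_eq] at hlt
  omega

/-- With `c t = #(l ∩ t) ≤ 2`, the sums of `c t` and of `(c t).choose 2` over the 14 blocks are 18
and 6, and `1 + (c t).choose 2 - c t` is the indicator of `c t = 0`. -/
theorem card_filter_subset_compl (h : IsDesign 2 G) (hl : #l = 3) (hlG : l ∉ G) :
    #{t ∈ G | t ⊆ lᶜ} = 2 := by
  have hle : ∀ t ∈ G, #(l ∩ t) ≤ 2 := by
    intro t ht
    by_contra! h3
    have hlt : l ∩ t = l := eq_of_subset_of_card_le inter_subset_left (by omega)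
    have : l = t := eq_of_subset_of_card_le (hlt ▸ inter_subset_right) (by rw [h.1 t ht, hl])
    exact hlG (this ▸ ht)
  have hsum := sum_card_inter fun x (_ : x ∈ l) => h.card_filter_mem x
  have hchoose := sum_choose_two_card_inter G l
  rw [sum_congr rfl fun q hq => h.2 q (mem_powersetCard.1 hq).2, sum_const, card_powersetCard,
    hl, smul_eq_mul] at hchoose
  have hblock : ∀ t ∈ G, 1 + (#(l ∩ t)).choose 2 = #(l ∩ t) + if t ⊆ lᶜ then 1 else 0 := by
    intro t ht
    have hiff : t ⊆ lᶜ ↔ #(l ∩ t) = 0 := by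
      rw [card_eq_zero, ← disjoint_iff_inter_eq_empty, subset_compl_iff_disjoint_left]
    have := hle t ht
    rw [if_congr hiff rfl rfl]
    interval_cases #(l ∩ t) <;> rfl
  have htotal := sum_congr rfl hblock
  rw [sum_add_distrib, sum_add_distrib, ← card_filter, sum_const, smul_eq_mul, h.card_eq, hsum,
    hchoose, hl] at htotal
  norm_num at htotal
  omega

end IsDesign

def omittedPoints (G : Finset (Finset (Fin 7))) (l : Finset (Fin 7)) : Finset (Fin 7) :=
  {x ∈ lᶜ | lᶜ.erase x ∈ G}

noncomputable def lineThrough (F : Finset (Finset (Fin 7))) (q : Finset (Fin 7)) :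
    Finset (Fin 7) :=
  Classical.epsilon fun t => t ∈ F ∧ q ⊆ t

noncomputable def omittedLine (F G : Finset (Finset (Fin 7))) (l : Finset (Fin 7)) :
    Finset (Fin 7) :=
  lineThrough F (omittedPoints G l)

theorem omittedPoints_subset_compl {G : Finset (Finset (Fin 7))} {l : Finset (Fin 7)} :
    omittedPoints G l ⊆ lᶜ :=
  filter_subset _ _

namespace IsDesign

variable {F G : Finset (Finset (Fin 7))} {l q t : Finset (Fin 7)}

theorem lineThrough_spec (h : IsDesign 1 F) (hq : #q = 2) :
    lineThrough F q ∈ F ∧ q ⊆ lineThrough F q := by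
  obtain ⟨t, ht⟩ := card_pos.1 (h.2 q hq ▸ Nat.one_pos)
  exact Classical.epsilon_spec (p := fun t => t ∈ F ∧ q ⊆ t) ⟨t, mem_filter.1 ht⟩

theorem lineThrough_eq (h : IsDesign 1 F) (hq : #q = 2) (ht : t ∈ F) (hqt : q ⊆ t) :
    lineThrough F q = t :=
  h.eq_of_subset_of_subset hq (h.lineThrough_spec hq).1 ht (h.lineThrough_spec hq).2 hqt

theorem exists_mem_omittedPoints_erase_eq (h : IsDesign 2 G) (hl : #l = 3) (ht : t ∈ G)
    (htl : t ⊆ lᶜ) : ∃ x ∈ omittedPoints G l, lᶜ.erase x = t := by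
  have hcov : t ⋖ lᶜ := covBy_iff_card_sdiff_eq_one.2
    ⟨htl, by rw [card_sdiff_of_subset htl, card_compl, hl, h.1 t ht]; rfl⟩
  obtain ⟨x, hx, rfl⟩ := hcov.exists_finset_erase
  exact ⟨x, mem_filter.2 ⟨hx, ht⟩, rfl⟩

theorem card_omittedPoints (h : IsDesign 2 G) (hl : #l = 3) (hlG : l ∉ G) :
    #(omittedPoints G l) = 2 := by
  rw [← h.card_filter_subset_compl hl hlG,
    ← card_image_of_injOn ((erase_injOn lᶜ).mono omittedPoints_subset_compl)]
  congr 1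
  ext t
  simp only [mem_image, mem_filter]
  constructor
  · rintro ⟨x, hx, rfl⟩
    exact ⟨(mem_filter.1 hx).2, erase_subset _ _⟩
  · rintro ⟨ht, htl⟩
    exact h.exists_mem_omittedPoints_erase_eq hl ht htl

/-- There are two blocks of `G` through the pair `lᶜ \ omittedPoints G l` and two inside `lᶜ`, and
the latter contain the pair. -/
theorem subset_compl_of_sdiff_omittedPoints_subset (h : IsDesign 2 G) (hl : #l = 3)
    (hlG : l ∉ G) (ht : t ∈ G) (hπt : lᶜ \ omittedPoints G l ⊆ t) : t ⊆ lᶜ := by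
  have hsub : {u ∈ G | u ⊆ lᶜ} ⊆ {u ∈ G | lᶜ \ omittedPoints G l ⊆ u} := by
    intro u hu
    obtain ⟨huG, hul⟩ := mem_filter.1 hu
    obtain ⟨x, hx, rfl⟩ := h.exists_mem_omittedPoints_erase_eq hl huG hul
    refine mem_filter.2 ⟨huG, fun y hy => mem_erase.2 ⟨?_, (mem_sdiff.1 hy).1⟩⟩
    rintro rfl
    exact (mem_sdiff.1 hy).2 hx
  have hπ : #(lᶜ \ omittedPoints G l) = 2 := by
    rw [card_sdiff_of_subset omittedPoints_subset_compl, card_compl, hl,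
      h.card_omittedPoints hl hlG]
    rfl
  have heq := eq_of_subset_of_card_le hsub
    (by rw [h.2 _ hπ, h.card_filter_subset_compl hl hlG])
  have hmem : t ∈ {u ∈ G | lᶜ \ omittedPoints G l ⊆ u} := mem_filter.2 ⟨ht, hπt⟩
  rw [← heq] at hmem
  exact (mem_filter.1 hmem).2

end IsDesign

section FanoInsideDesign

variable {F G : Finset (Finset (Fin 7))} {l : Finset (Fin 7)}
  (hF : IsDesign 1 F) (hG : IsDesign 2 G) (hFG : Disjoint F G)
include hF hG hFG

theorem card_omittedPoints_of_mem (hl : l ∈ F) : #(omittedPoints G l) = 2 :=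
  hG.card_omittedPoints (hF.1 l hl) (disjoint_left.1 hFG hl)

theorem omittedLine_mem (hl : l ∈ F) : omittedLine F G l ∈ F :=
  (hF.lineThrough_spec (card_omittedPoints_of_mem hF hG hFG hl)).1

theorem omittedPoints_subset_omittedLine (hl : l ∈ F) :
    omittedPoints G l ⊆ omittedLine F G l :=
  (hF.lineThrough_spec (card_omittedPoints_of_mem hF hG hFG hl)).2

theorem omittedLine_ne (hl : l ∈ F) : omittedLine F G l ≠ l := by
  intro heq
  obtain ⟨x, hx⟩ := card_pos.1 ((card_omittedPoints_of_mem hF hG hFG hl).symm ▸ two_pos)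
  have hxl := omittedPoints_subset_omittedLine hF hG hFG hl hx
  rw [heq] at hxl
  exact mem_compl.1 (omittedPoints_subset_compl hx) hxl

/-- Writing `S = omittedPoints G l` and `π = lᶜ \ S`, the line `m` through `S` is `S` plus a point
of `l`, so `π ⊆ mᶜ`. A block `mᶜ.erase x` of `G` with `x ∉ π` would contain `π`, hence lie inside
`lᶜ ∩ mᶜ ⊆ π`, which is too small. -/
theorem omittedPoints_omittedLine (hl : l ∈ F) :
    omittedPoints G (omittedLine F G l) = lᶜ \ omittedPoints G l := by
  set S := omittedPoints G l
  set m := omittedLine F G l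
  have hS := card_omittedPoints_of_mem hF hG hFG hl
  have hmF := omittedLine_mem hF hG hFG hl
  have hSm : S ⊆ m := omittedPoints_subset_omittedLine hF hG hFG hl
  have hSl : S ⊆ lᶜ := omittedPoints_subset_compl
  obtain ⟨e, he⟩ := hF.inter_nonempty hmF hl
  obtain ⟨hem, hel⟩ := mem_inter.1 he
  have hm : insert e S = m := eq_of_subset_of_card_le (insert_subset hem hSm) (by
    rw [hF.1 m hmF, card_insert_of_notMem fun heS => mem_compl.1 (hSl heS) hel, hS])
  refine eq_of_subset_of_card_le (fun x hx => ?_) ?_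
  · obtain ⟨hxm, hxG⟩ := mem_filter.1 hx
    by_contra hxπ
    have hπ : lᶜ \ S ⊆ mᶜ.erase x := by
      intro y hy
      obtain ⟨hyl, hyS⟩ := mem_sdiff.1 hy
      refine mem_erase.2 ⟨fun hyx => hxπ (hyx ▸ hy), mem_compl.2 fun hym => ?_⟩
      rw [← hm, mem_insert] at hym
      rcases hym with rfl | hyS'
      exacts [mem_compl.1 hyl hel, hyS hyS']
    have hinside : mᶜ.erase x ⊆ lᶜ \ S := fun y hy =>
      mem_sdiff.2 ⟨hG.subset_compl_of_sdiff_omittedPoints_subset (hF.1 l hl)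
        (disjoint_left.1 hFG hl) hxG hπ hy, fun hyS => mem_compl.1 (mem_of_mem_erase hy) (hSm hyS)⟩
    have := card_le_card hinside
    rw [card_erase_of_mem hxm, card_compl, hF.1 m hmF, card_sdiff_of_subset hSl, card_compl,
      hF.1 l hl, hS] at this
    simp at this
  · rw [card_omittedPoints_of_mem hF hG hFG hmF, card_sdiff_of_subset hSl, card_compl, hF.1 l hl,
      hS]
    rfl

theorem omittedLine_omittedLine_omittedLine (hl : l ∈ F) :
    omittedLine F G (omittedLine F G (omittedLine F G l)) = l := by
  have hmF := omittedLine_mem hF hG hFG hl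
  refine hF.lineThrough_eq (card_omittedPoints_of_mem hF hG hFG (omittedLine_mem hF hG hFG hmF))
    hl ?_
  rw [omittedPoints_omittedLine hF hG hFG hmF, omittedPoints_omittedLine hF hG hFG hl]
  intro x hx
  simp only [mem_sdiff, mem_compl, not_and, not_not] at hx
  by_contra hxl
  exact hx.1 (omittedPoints_subset_omittedLine hF hG hFG hl (hx.2 hxl))

end FanoInsideDesign

theorem no_fano_in_2_7_3_3_general (D : Finset (Finset (Fin 7)))
    (hD : IsDesign 3 D) :
    ∀ F ⊆ D, ¬ IsDesign 1 F := by
  intro F hFD hF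
  have hG : IsDesign 2 (D \ F) := hD.sdiff hF hFD
  have hFG : Disjoint F (D \ F) := disjoint_sdiff
  have h3 : 3 ∣ #F := three_dvd_card_of_iterate_eq_self F (omittedLine F (D \ F))
    (fun _ => omittedLine_mem hF hG hFG) (fun _ => omittedLine_ne hF hG hFG)
    (fun _ => omittedLine_omittedLine_omittedLine hF hG hFG)
  rw [hF.card_eq] at h3
  norm_num at h3

/-- no simple 2-(7,3,3) design contains a Fano plane. -/
theorem no_fano_in_2_7_3_3 (D : Finset (Finset (Fin 7)))
    (hD : IsDesign 3 D) (hcard : D.card = 21) :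
    ∀ F ⊆ D, ¬ IsDesign 1 F :=
  no_fano_in_2_7_3_3_general D hD
end

section
/- If T is a T(1,2,v) trade on a v-set X with v ≡ 3 (mod 4) of maximum volume, then its volume is (1/2)·binom(v,2) - 3/2, and the set of pairs of X not occurring in T forms a triangle: binom(X,2) \ (T⁺ ∪ T⁻) = {x₁x₂, x₁x₃, x₂x₃} for some three points x₁, x₂, x₃ ∈ X. -/
/-!
Every point lies in as many pairs of `T⁺` as of `T⁻`, so its degree in `T⁺ ∪ T⁻` is even; as
`v - 1` is even, every point has even degree in the family `M` of uncovered pairs. For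
`v ≡ 3 (mod 4)` the number `C(v,2) = |M| + 2|T⁺|` is odd, so `|M|` is odd, and `|M| ≠ 1` because a
single pair has points of degree one. An explicit trade on `v` points covering all pairs but a
triangle shows that a trade of maximum volume has `|M| ≤ 3`, hence `|M| = 3`; and three pairs in
which every point has even degree form a triangle.
-/

open Finset

namespace T12Trade

variable {α : Type*} [DecidableEq α]

def degree (S : Finset (Finset α)) (x : α) : ℕ := #{e ∈ S | x ∈ e}

structure IsTrade (Tp Tm : Finset (Finset α)) : Prop where
  card_eq_two : ∀ e ∈ Tp ∪ Tm, #e = 2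
  disjoint : Disjoint Tp Tm
  degree_eq : ∀ x, degree Tp x = degree Tm x

section Degree

variable {S T : Finset (Finset α)}

lemma degree_union (h : Disjoint S T) (x : α) : degree (S ∪ T) x = degree S x + degree T x := by
  rw [degree, filter_union, card_union_of_disjoint (disjoint_filter_filter h)]; rfl

lemma degree_sdiff_add_degree (h : T ⊆ S) (x : α) :
    degree (S \ T) x + degree T x = degree S x := by
  rw [← degree_union sdiff_disjoint, sdiff_union_of_subset h]

lemma degree_le_card (S : Finset (Finset α)) (x : α) : degree S x ≤ #S := card_filter_le _ _

lemma sum_degree [Fintype α] (S : Finset (Finset α)) : ∑ x, degree S x = ∑ e ∈ S, #e := by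
  simp only [degree, card_filter]
  rw [sum_comm]
  simp

lemma sum_degree_of_card_eq_two [Fintype α] (h : ∀ e ∈ S, #e = 2) :
    ∑ x, degree S x = 2 * #S := by
  rw [sum_degree, sum_congr rfl h, sum_const, smul_eq_mul, mul_comm]

lemma IsTrade.card_eq [Fintype α] {Tp Tm : Finset (Finset α)} (hT : IsTrade Tp Tm) :
    #Tp = #Tm := by
  have hp := sum_degree_of_card_eq_two fun e he => hT.card_eq_two e (mem_union_left Tm he)
  have hm := sum_degree_of_card_eq_two fun e he => hT.card_eq_two e (mem_union_right Tp he)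
  simp only [hT.degree_eq] at hp
  omega

end Degree

section PairsOf

lemma pair_eq_pair_iff {x y z w : α} :
    ({x, y} : Finset α) = {z, w} ↔ x = z ∧ y = w ∨ x = w ∧ y = z := by
  rw [← coe_inj]; push_cast; exact Set.pair_eq_pair_iff

lemma pair_right_injective (x : α) : Function.Injective fun y => ({x, y} : Finset α) := by
  intro y z h
  rcases pair_eq_pair_iff.1 h with ⟨-, h⟩ | ⟨h, h'⟩
  exacts [h, h'.trans h]

variable [Fintype α]

def pairsOf (r : α → α → Prop) [DecidableRel r] : Finset (Finset α) :=
  (univ.filter fun p : α × α => r p.1 p.2).image fun p => {p.1, p.2}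

variable {r s : α → α → Prop} [DecidableRel r] [DecidableRel s]

@[simp]
lemma mem_pairsOf {e : Finset α} : e ∈ pairsOf r ↔ ∃ x y, r x y ∧ {x, y} = e := by
  simp [pairsOf]

lemma card_eq_two_of_mem_pairsOf (hr : ∀ x, ¬ r x x) {e : Finset α} (he : e ∈ pairsOf r) :
    #e = 2 := by
  obtain ⟨x, y, hxy, rfl⟩ := mem_pairsOf.1 he
  exact card_pair fun h => hr x (h ▸ hxy)

lemma degree_pairsOf (hr : ∀ x y, r x y → r y x) (x : α) :
    degree (pairsOf r) x = #{y | r x y} := by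
  have : {e ∈ pairsOf r | x ∈ e} = (univ.filter (r x)).image fun y => {x, y} := by
    ext e
    simp only [mem_filter, mem_pairsOf, mem_image, mem_univ, true_and]
    constructor
    · rintro ⟨⟨u, v, huv, rfl⟩, hx⟩
      rcases mem_insert.1 hx with rfl | hx
      · exact ⟨v, huv, rfl⟩
      · rw [mem_singleton.1 hx]
        exact ⟨u, hr _ _ huv, pair_comm _ _⟩
    · rintro ⟨y, hy, rfl⟩
      exact ⟨⟨x, y, hy, rfl⟩, mem_insert_self _ _⟩
  rw [degree, this, card_image_of_injective _ (pair_right_injective x)]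

lemma disjoint_pairsOf (hs : ∀ x y, s x y → s y x) (h : ∀ x y, r x y → ¬ s x y) :
    Disjoint (pairsOf r) (pairsOf s) := by
  rw [disjoint_left]
  intro e he he'
  obtain ⟨x, y, hxy, rfl⟩ := mem_pairsOf.1 he
  obtain ⟨u, v, huv, heq⟩ := mem_pairsOf.1 he'
  rcases pair_eq_pair_iff.1 heq with ⟨rfl, rfl⟩ | ⟨rfl, rfl⟩
  exacts [h _ _ hxy huv, h _ _ hxy (hs _ _ huv)]

lemma powersetCard_two_eq_pairsOf : univ.powersetCard 2 = pairsOf (α := α) (· ≠ ·) := by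
  ext e
  simp [card_eq_two, eq_comm]

lemma degree_powersetCard_two (x : α) :
    degree (univ.powersetCard 2) x = Fintype.card α - 1 := by
  rw [powersetCard_two_eq_pairsOf, degree_pairsOf fun _ _ => Ne.symm, filter_ne,
    card_erase_of_mem (mem_univ x), card_univ]

lemma isTrade_of_sign (f : α → α → SignType) (hsymm : ∀ x y, f x y = f y x)
    (hdiag : ∀ x, f x x = 0) (hbal : ∀ x, #{y | f x y = 1} = #{y | f x y = -1}) :
    IsTrade (pairsOf (f · · = 1)) (pairsOf (f · · = -1)) := by
  have hsymm' {c : SignType} : ∀ x y, f x y = c → f y x = c := fun x y h => (hsymm y x).trans h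
  refine ⟨?_, disjoint_pairsOf hsymm' fun x y h h' => by simp [h] at h', fun x => ?_⟩
  · intro e he
    rcases mem_union.1 he with he | he <;>
      exact card_eq_two_of_mem_pairsOf (fun x h => by simp [hdiag] at h) he
  · rw [degree_pairsOf hsymm', degree_pairsOf hsymm', hbal]

end PairsOf

section Uncovered

variable [Fintype α] {Tp Tm : Finset (Finset α)}

def uncovered (Tp Tm : Finset (Finset α)) : Finset (Finset α) := univ.powersetCard 2 \ (Tp ∪ Tm)

lemma card_eq_two_of_mem_uncovered {e : Finset α} (he : e ∈ uncovered Tp Tm) : #e = 2 :=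
  (mem_powersetCard.1 (mem_sdiff.1 he).1).2

lemma IsTrade.union_subset (hT : IsTrade Tp Tm) : Tp ∪ Tm ⊆ univ.powersetCard 2 :=
  fun e he => mem_powersetCard.2 ⟨subset_univ e, hT.card_eq_two e he⟩

lemma IsTrade.card_uncovered (hT : IsTrade Tp Tm) :
    #(uncovered Tp Tm) + 2 * #Tp = (Fintype.card α).choose 2 := by
  have h := card_sdiff_add_card_eq_card hT.union_subset
  rw [card_union_of_disjoint hT.disjoint, ← hT.card_eq, card_powersetCard, card_univ] at h
  unfold uncovered
  omega

lemma IsTrade.even_degree_uncovered (hT : IsTrade Tp Tm) (hα : Odd (Fintype.card α)) (x : α) :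
    Even (degree (uncovered Tp Tm) x) := by
  have h := degree_sdiff_add_degree hT.union_subset x
  rw [degree_powersetCard_two, degree_union hT.disjoint, ← hT.degree_eq] at h
  obtain ⟨m, hm⟩ := hα
  exact ⟨m - degree Tp x, by unfold uncovered; omega⟩

end Uncovered

section EvenFamily

variable {M : Finset (Finset α)}

lemma card_ne_one_of_even_degree (hM : ∀ e ∈ M, #e = 2) (heven : ∀ x, Even (degree M x)) :
    #M ≠ 1 := by
  intro h1
  obtain ⟨e, rfl⟩ := card_eq_one.1 h1
  obtain ⟨x, y, hxy, rfl⟩ := card_eq_two.1 (hM _ (mem_singleton_self _))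
  have : degree {{x, y}} x = 1 := by simp [degree, filter_singleton]
  exact Nat.not_even_one (this ▸ heven x)

lemma powersetCard_two_triple {x y z : α} (hxy : x ≠ y) (hxz : x ≠ z) (hyz : y ≠ z) :
    ({x, y, z} : Finset α).powersetCard 2 = {{x, y}, {x, z}, {y, z}} := by
  ext e
  simp only [mem_powersetCard, card_eq_two, mem_insert, mem_singleton]
  constructor
  · rintro ⟨hsub, u, v, huv, rfl⟩
    have hu := hsub (mem_insert_self u {v})
    have hv := hsub (mem_insert_of_mem (mem_singleton_self v))
    simp only [mem_insert, mem_singleton] at hu hv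
    rcases hu with rfl | rfl | rfl <;> rcases hv with rfl | rfl | rfl <;> simp_all [pair_comm]
  · rintro (rfl | rfl | rfl) <;> refine ⟨?_, _, _, ‹_›, rfl⟩ <;> intro a <;> simp <;> tauto

lemma exists_eq_triangle (hM : ∀ e ∈ M, #e = 2) (heven : ∀ x, Even (degree M x))
    (h3 : #M = 3) :
    ∃ x₁ x₂ x₃ : α, x₁ ≠ x₂ ∧ x₁ ≠ x₃ ∧ x₂ ≠ x₃ ∧ M = {{x₁, x₂}, {x₁, x₃}, {x₂, x₃}} := by
  set S := M.biUnion id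
  have hsub : ∀ e ∈ M, e ⊆ S := fun e he => subset_biUnion_of_mem id he
  have hdeg : ∀ x ∈ S, degree M x = 2 := by
    intro x hx
    obtain ⟨e, he, hxe⟩ := mem_biUnion.1 hx
    have hpos : 0 < degree M x := card_pos.2 ⟨e, mem_filter.2 ⟨he, hxe⟩⟩
    have := degree_le_card M x
    obtain ⟨m, hm⟩ := heven x
    omega
  have hS : #S = 3 := by
    have := sum_card_inter (B := M) hdeg
    rw [sum_congr rfl fun e he => congrArg card (inter_eq_right.2 (hsub e he)),
      sum_congr rfl hM, sum_const, h3] at this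
    simp only [smul_eq_mul] at this
    omega
  obtain ⟨x₁, x₂, x₃, h12, h13, h23, hSeq⟩ := card_eq_three.1 hS
  refine ⟨x₁, x₂, x₃, h12, h13, h23, ?_⟩
  rw [← powersetCard_two_triple h12 h13 h23, ← hSeq]
  refine eq_of_subset_of_card_le (fun e he => mem_powersetCard.2 ⟨hsub e he, hM e he⟩) ?_
  rw [card_powersetCard, hS, h3]; rfl

end EvenFamily

section Construction

/- The points are a triangle `inl i` and four classes `inr (τ, σ, _)` of `k` points each; the sign
`1` puts a pair into `T⁺`, `-1` into `T⁻`. A point is balanced iff its signs sum to zero. For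
`inl i` the factor `if τ then -1 else 1` cancels over `τ`. For `inr (τ, σ, _)` the factor
`if σ = σ' then 1 else -1` cancels over `σ'`, and the missing diagonal term `if τ then -1 else 1`
is the sum of its three signs towards the triangle. -/
def triangleSign (k : ℕ) : Fin 3 ⊕ Bool × Bool × Fin k → Fin 3 ⊕ Bool × Bool × Fin k → SignType
  | .inl _, .inl _ => 0
  | .inl i, .inr (τ, _, _) | .inr (τ, _, _), .inl i =>
      (if i = 2 then -1 else 1) * (if τ then -1 else 1)
  | .inr p, .inr q =>
      if p = q then 0 else (if p.2.1 = q.2.1 then 1 else -1) * (if p.1 && q.1 then -1 else 1)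

lemma triangleSign_comm (k : ℕ) (x y) : triangleSign k x y = triangleSign k y x := by
  rcases x with i | p <;> rcases y with j | q
  · rfl
  · rfl
  · rfl
  · simp only [triangleSign, @eq_comm _ p, @eq_comm _ p.2.1, Bool.and_comm]

lemma triangleSign_self (k : ℕ) (x) : triangleSign k x x = 0 := by
  rcases x with i | p <;> simp [triangleSign]

lemma card_triangleSign (k : ℕ) (x) {c : SignType} (hc : c ≠ 0) :
    #{y | triangleSign k x y = c} = if x.isLeft then 2 * k else 2 * k + 1 := by
  simp only [card_filter, Fintype.sum_sum_type, Fintype.sum_prod_type, Fintype.sum_bool,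
    Fin.sum_univ_three]
  rcases x with i | ⟨τ, σ, a⟩
  · fin_cases i <;> rcases c with _ | _ | _ <;> simp [triangleSign] at * <;> omega
  · have := a.pos
    cases τ <;> cases σ <;> rcases c with _ | _ | _ <;>
      simp [triangleSign, ite_eq_iff, sum_ite, filter_ne] at * <;> omega

lemma exists_isTrade_card [Fintype α] (hα : Fintype.card α % 4 = 3) :
    ∃ Tp Tm : Finset (Finset α), IsTrade Tp Tm ∧
      4 * #Tp + 6 = Fintype.card α * (Fintype.card α - 1) := by
  obtain ⟨k, hk⟩ : ∃ k, Fintype.card α = 4 * k + 3 := ⟨Fintype.card α / 4, by omega⟩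
  obtain e : α ≃ Fin 3 ⊕ Bool × Bool × Fin k := Fintype.equivOfCardEq (by simp [hk]; ring)
  set f : α → α → SignType := fun x y => triangleSign k (e x) (e y)
  have hsymm : ∀ x y, f x y = f y x := fun x y => triangleSign_comm k _ _
  have hcard : ∀ x {c : SignType}, c ≠ 0 →
      #{y | f x y = c} = if (e x).isLeft then 2 * k else 2 * k + 1 := fun x c hc =>
    (card_equiv e fun y => by simp [f]).trans (card_triangleSign k (e x) hc)
  have hT := isTrade_of_sign f hsymm (fun x => triangleSign_self k _) fun x => by
    rw [hcard x one_ne_zero, hcard x (by decide)]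
  refine ⟨_, _, hT, ?_⟩
  have hsum := sum_degree_of_card_eq_two fun t ht => hT.card_eq_two t (mem_union_left _ ht)
  have hdeg : ∀ x, degree (pairsOf (f · · = 1)) x = if (e x).isLeft then 2 * k else 2 * k + 1 :=
    fun x => (degree_pairsOf (fun x y h => (hsymm y x).trans h) x).trans (hcard x one_ne_zero)
  rw [← e.symm.sum_comp] at hsum
  simp only [hdeg, Equiv.apply_symm_apply, Fintype.sum_sum_type, Sum.isLeft_inl, Sum.isLeft_inr,
    if_true, Bool.false_eq_true, if_false, sum_const, card_univ, Fintype.card_fin,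
    Fintype.card_prod, Fintype.card_bool, smul_eq_mul] at hsum
  rw [hk, show 4 * k + 3 - 1 = 4 * k + 2 by omega]
  linarith

end Construction

end T12Trade

open T12Trade

theorem max_T12_trade_general (V : Type*) [Fintype V] [DecidableEq V]
    (hv : Fintype.card V % 4 = 3)
    (Tp Tm : Finset (Finset V))
    (hcard2 : ∀ e ∈ Tp ∪ Tm, e.card = 2)
    (hdisj : Disjoint Tp Tm)
    (hbal : ∀ x : V, (Tp.filter (fun e => x ∈ e)).card = (Tm.filter (fun e => x ∈ e)).card)
    (hmax : ∀ Tp' Tm' : Finset (Finset V),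
      (∀ e ∈ Tp' ∪ Tm', e.card = 2) → Disjoint Tp' Tm' → Tp'.Nonempty →
      Tp'.card = Tm'.card →
      (∀ x : V, (Tp'.filter (fun e => x ∈ e)).card = (Tm'.filter (fun e => x ∈ e)).card) →
      Tp'.card ≤ Tp.card) :
    4 * Tp.card + 6 = Fintype.card V * (Fintype.card V - 1) ∧
    ∃ x₁ x₂ x₃ : V, x₁ ≠ x₂ ∧ x₁ ≠ x₃ ∧ x₂ ≠ x₃ ∧
      (Finset.univ.powersetCard 2 : Finset (Finset V)) \ (Tp ∪ Tm) =
        {{x₁, x₂}, {x₁, x₃}, {x₂, x₃}} := by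
  have hT : IsTrade Tp Tm := ⟨hcard2, hdisj, hbal⟩
  have hM : ∀ e ∈ uncovered Tp Tm, #e = 2 := fun e => card_eq_two_of_mem_uncovered
  have heven := hT.even_degree_uncovered (Nat.odd_iff.2 (by omega))
  have hcard := hT.card_uncovered
  have hchoose : 2 * (Fintype.card V).choose 2 = Fintype.card V * (Fintype.card V - 1) := by
    rw [Nat.choose_two_right, Nat.mul_div_cancel' (Nat.even_mul_pred_self _).two_dvd]
  obtain ⟨Tp', Tm', hT', hvol'⟩ := exists_isTrade_card hv
  have hle : #Tp' ≤ #Tp := by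
    rcases Tp'.eq_empty_or_nonempty with h | h
    · simp [h]
    · exact hmax Tp' Tm' hT'.card_eq_two hT'.disjoint h hT'.card_eq hT'.degree_eq
  have hM1 := card_ne_one_of_even_degree hM heven
  have h3 : #(uncovered Tp Tm) = 3 := by omega
  exact ⟨by omega, exists_eq_triangle hM heven h3⟩

/-- a maximum-volume T(1,2,v) trade with v ≡ 3 (mod 4) has volume
(1/2)C(v,2) - 3/2 (stated multiplied by 4), and the uncovered pairs form a triangle. -/
theorem max_T12_trade (V : Type*) [Fintype V] [DecidableEq V]
    (hv : Fintype.card V % 4 = 3)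
    (Tp Tm : Finset (Finset V))
    (hcard2 : ∀ e ∈ Tp ∪ Tm, e.card = 2)
    (hdisj : Disjoint Tp Tm) (hne : Tp.Nonempty)
    (hvol : Tp.card = Tm.card)
    (hbal : ∀ x : V, (Tp.filter (fun e => x ∈ e)).card = (Tm.filter (fun e => x ∈ e)).card)
    (hmax : ∀ Tp' Tm' : Finset (Finset V),
      (∀ e ∈ Tp' ∪ Tm', e.card = 2) → Disjoint Tp' Tm' → Tp'.Nonempty →
      Tp'.card = Tm'.card →
      (∀ x : V, (Tp'.filter (fun e => x ∈ e)).card = (Tm'.filter (fun e => x ∈ e)).card) →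
      Tp'.card ≤ Tp.card) :
    4 * Tp.card + 6 = Fintype.card V * (Fintype.card V - 1) ∧
    ∃ x₁ x₂ x₃ : V, x₁ ≠ x₂ ∧ x₁ ≠ x₃ ∧ x₂ ≠ x₃ ∧
      (Finset.univ.powersetCard 2 : Finset (Finset V)) \ (Tp ∪ Tm) =
        {{x₁, x₂}, {x₁, x₃}, {x₂, x₃}} :=
  max_T12_trade_general V hv Tp Tm hcard2 hdisj hbal hmax
end

section
/- Let X, Y be disjoint sets with |X| = n odd and |Y| = n + 1, let (X, B₀) be a Steiner triple system on X, let F₁, ..., F_n be a 1-factorization of the complete graph on Y, and let B' = ⋃ᵢ xᵢ · Fᵢ (all triples {xᵢ} ∪ e with e ∈ Fᵢ). Then (X ∪ Y, B₀ ∪ B') is a Steiner triple system on 2n + 1 points: every 2-subset of X ∪ Y lies in exactly one triple. -/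
/-- the standard doubling construction: an STS(n) on X together
with a 1-factorization of the complete graph on an (n+1)-set Y gives an
STS(2n+1) on X ∪ Y. -/
theorem sts_doubling {V : Type*} [DecidableEq V] (n : ℕ) (hodd : Odd n)
    (X Y : Finset V) (hX : X.card = n) (hY : Y.card = n + 1) (hXY : Disjoint X Y)
    (x : Fin n → V) (hxinj : Function.Injective x) (hxmem : ∀ i, x i ∈ X)
    (B₀ : Finset (Finset V))
    (hB₀sub : ∀ t ∈ B₀, t.card = 3 ∧ t ⊆ X)
    (hB₀sts : ∀ p : Finset V, p ⊆ X → p.card = 2 → ∃! t, t ∈ B₀ ∧ p ⊆ t)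
    (F : Fin n → Finset (Finset V))
    (hFedge : ∀ i, ∀ e ∈ F i, e.card = 2 ∧ e ⊆ Y)
    (hFmatch : ∀ i, ∀ y ∈ Y, ∃! e, e ∈ F i ∧ y ∈ e)
    (hFpart : ∀ e : Finset V, e ⊆ Y → e.card = 2 → ∃! i : Fin n, e ∈ F i) :
    ∀ p : Finset V, p ⊆ X ∪ Y → p.card = 2 →
      ∃! t, t ∈ B₀ ∪ (Finset.univ.biUnion (fun i => (F i).image (insert (x i)))) ∧
        p ⊆ t := by
  classical
  have hdisj : ∀ v, v ∈ X → v ∉ Y := fun v hv => Finset.disjoint_left.mp hXY hv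
  have hsurj : ∀ v ∈ X, ∃ i, x i = v := by
    have himg : Finset.image x Finset.univ = X := by
      apply Finset.eq_of_subset_of_card_le
      · intro v hv
        simp only [Finset.mem_image] at hv
        obtain ⟨i, _, rfl⟩ := hv
        exact hxmem i
      · rw [Finset.card_image_of_injective _ hxinj, Finset.card_univ, Fintype.card_fin, hX]
    intro v hv
    rw [← himg] at hv
    simp only [Finset.mem_image, Finset.mem_univ, true_and] at hv
    exact hv
  intro p hpXY hp2
  set B' := Finset.univ.biUnion (fun i => (F i).image (insert (x i))) with hB'
  have hB'mem : ∀ t, t ∈ B' ↔ ∃ i, ∃ e ∈ F i, insert (x i) e = t := by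
    intro t
    simp [hB', Finset.mem_biUnion, Finset.mem_image]
  by_cases hpX : p ⊆ X
  · obtain ⟨t, ⟨htB, hpt⟩, huniq⟩ := hB₀sts p hpX hp2
    refine ⟨t, ⟨Finset.mem_union_left _ htB, hpt⟩, ?_⟩
    rintro t' ⟨ht', hpt'⟩
    rcases Finset.mem_union.mp ht' with h | h
    · exact huniq t' ⟨h, hpt'⟩
    · exfalso
      obtain ⟨i, e, he, rfl⟩ := (hB'mem t').mp h
      have hsub : p ⊆ {x i} := by
        intro c hc
        rcases Finset.mem_insert.mp (hpt' hc) with h1 | h2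
        · simp [h1]
        · exact absurd ((hFedge i e he).2 h2) (hdisj c (hpX hc))
      have := Finset.card_le_card hsub
      simp [hp2] at this
  · by_cases hpY : p ⊆ Y
    · obtain ⟨i, hpFi, hiuniq⟩ := hFpart p hpY hp2
      refine ⟨insert (x i) p,
        ⟨Finset.mem_union_right _ ((hB'mem _).mpr ⟨i, p, hpFi, rfl⟩),
          Finset.subset_insert _ _⟩, ?_⟩
      rintro t' ⟨ht', hpt'⟩
      rcases Finset.mem_union.mp ht' with h | h
      · exfalso
        obtain ⟨c, hc⟩ := Finset.card_pos.mp (by omega : 0 < p.card)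
        exact hdisj c ((hB₀sub t' h).2 (hpt' hc)) (hpY hc)
      · obtain ⟨j, e, he, rfl⟩ := (hB'mem t').mp h
        have hpe : p ⊆ e := by
          intro c hc
          rcases Finset.mem_insert.mp (hpt' hc) with h1 | h2
          · subst h1; exact absurd (hpY hc) (hdisj _ (hxmem j))
          · exact h2
        have hpeq : p = e :=
          Finset.eq_of_subset_of_card_le hpe (by rw [hp2, (hFedge j e he).1])
        have hji : j = i := hiuniq j (hpeq ▸ he)
        rw [hji, ← hpeq]
    · -- mixed case
      obtain ⟨b, hbp, hbX⟩ := Finset.not_subset.mp hpX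
      obtain ⟨a, hap, haY⟩ := Finset.not_subset.mp hpY
      have haX : a ∈ X := by
        rcases Finset.mem_union.mp (hpXY hap) with h | h
        · exact h
        · exact absurd h haY
      have hbY : b ∈ Y := by
        rcases Finset.mem_union.mp (hpXY hbp) with h | h
        · exact absurd h hbX
        · exact h
      have hab : a ≠ b := fun h => hbX (h ▸ haX)
      have hpab : p = {a, b} := by
        symm
        apply Finset.eq_of_subset_of_card_le
        · intro c hc
          rcases Finset.mem_insert.mp hc with h1 | h1
          · exact h1 ▸ hap
          · exact (Finset.mem_singleton.mp h1) ▸ hbp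
        · rw [hp2, Finset.card_insert_of_notMem (by simp [hab]), Finset.card_singleton]
      obtain ⟨i, hia⟩ := hsurj a haX
      obtain ⟨e, ⟨heF, hbe⟩, heuniq⟩ := hFmatch i b hbY
      refine ⟨insert (x i) e,
        ⟨Finset.mem_union_right _ ((hB'mem _).mpr ⟨i, e, heF, rfl⟩), ?_⟩, ?_⟩
      · rw [hpab]
        intro c hc
        rcases Finset.mem_insert.mp hc with h1 | h1
        · subst h1; rw [← hia]; exact Finset.mem_insert_self _ _
        · rw [Finset.mem_singleton.mp h1]; exact Finset.mem_insert_of_mem hbe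
      · rintro t' ⟨ht', hpt'⟩
        rcases Finset.mem_union.mp ht' with h | h
        · exact absurd ((hB₀sub t' h).2 (hpt' hbp)) (fun hh => hdisj b hh hbY)
        · obtain ⟨j, e', he', rfl⟩ := (hB'mem t').mp h
          have hij : j = i := by
            rcases Finset.mem_insert.mp (hpt' hap) with h1 | h1
            · exact hxinj (h1.symm.trans hia.symm) |>.symm ▸ rfl
            · exact absurd ((hFedge j e' he').2 h1) (fun hh => hdisj a haX hh)
          subst hij
          have hbe' : b ∈ e' := by
            rcases Finset.mem_insert.mp (hpt' hbp) with h1 | h1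
            · exact absurd hbY (h1 ▸ hdisj _ (hxmem j))
            · exact h1
          rw [heuniq e' ⟨he', hbe'⟩]
end
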